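/- arXiv:1710.07179 — 11 statements merged into one kernel-verified Lean document; each statement's English description precedes it below -/
import Mathlib

section
/- Let P be a finite poset and R a restriction function on P. Then the following are equivalent: (i) for every p ∈ P and every k ∈ R(p) there exists an increasing labeling f ∈ Inc_R(P) with f(p) = k; (ii) R is consistent. -/
/-- An increasing labeling of the finite poset `P` with respect to the
restriction function `R`: each label lies in the prescribed set, and labels
strictly increase along the order. -/
def IncLabel {P : Type*} [PartialOrder P] (R : P → Finset ℤ) (f : P → ℤ) : Prop :=
  (∀ p, f p ∈ R p) ∧ ∀ ⦃p₁ p₂ : P⦄, p₁ < p₂ → f p₁ < f p₂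

/-- A restriction function `R` (with each `R p` nonempty) is consistent if
for every covering relation `x ⋖ y` we have `min R(x) < min R(y)` and
`max R(x) < max R(y)`. -/
def Consistent {P : Type*} [PartialOrder P] (R : P → Finset ℤ)
    (hR : ∀ p, (R p).Nonempty) : Prop :=
  ∀ x y : P, x ⋖ y →
    (R x).min' (hR x) < (R y).min' (hR y) ∧ (R x).max' (hR x) < (R y).max' (hR y)

section Aux

variable {P : Type*} [Fintype P] [PartialOrder P]

open Classical in
/-- Greedy labeling: `k` at `p`, below `p` the largest value compatible with
labels above, elsewhere the maximum. -/
noncomputable def greedy (R : P → Finset ℤ) (p : P) (k : ℤ) : P → ℤ :=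
  (wellFounded_gt (α := P)).fix fun q ih =>
    if q = p then k
    else ((R q).filter fun a => ∀ y, ∀ h : q < y, q ⋖ y → y ≤ p → a < ih y h).max.getD 0

open Classical in
theorem greedy_eq (R : P → Finset ℤ) (p : P) (k : ℤ) (q : P) :
    greedy R p k q = if q = p then k
      else ((R q).filter fun a => ∀ y, q < y → q ⋖ y → y ≤ p →
        a < greedy R p k y).max.getD 0 := by
  rw [greedy, WellFounded.fix_eq]

variable {R : P → Finset ℤ} {hR : ∀ p, (R p).Nonempty}

theorem min'_lt_min'_of_lt (hc : Consistent R hR) :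
    ∀ b a : P, a < b → (R a).min' (hR a) < (R b).min' (hR b) := by
  intro b
  induction b using (wellFounded_lt (α := P)).induction with
  | _ b ih =>
    intro a hab
    obtain ⟨c, hac, hcb⟩ := exists_le_covBy_of_lt hab
    rcases eq_or_lt_of_le hac with rfl | hlt
    · exact (hc _ _ hcb).1
    · exact (ih c hcb.lt a hlt).trans (hc _ _ hcb).1

theorem max'_lt_max'_of_lt (hc : Consistent R hR) :
    ∀ b a : P, a < b → (R a).max' (hR a) < (R b).max' (hR b) := by
  intro b
  induction b using (wellFounded_lt (α := P)).induction with
  | _ b ih =>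
    intro a hab
    obtain ⟨c, hac, hcb⟩ := exists_le_covBy_of_lt hab
    rcases eq_or_lt_of_le hac with rfl | hlt
    · exact (hc _ _ hcb).2
    · exact (ih c hcb.lt a hlt).trans (hc _ _ hcb).2

open Classical in
theorem greedy_spec (hc : Consistent R hR) {p : P} {k : ℤ} (hk : k ∈ R p) :
    ∀ q : P, greedy R p k q ∈ R q ∧
      ∀ y, q ⋖ y → y ≤ p → greedy R p k q < greedy R p k y := by
  intro q
  induction q using (wellFounded_gt (α := P)).induction with
  | _ q ih =>
    by_cases hq : q = p
    · subst hq
      rw [greedy_eq, if_pos rfl]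
      exact ⟨hk, fun y hy hyp => ((hy.lt.trans_le hyp).false).elim⟩
    · rw [greedy_eq, if_neg hq]
      set S := (R q).filter fun a => ∀ y, q < y → q ⋖ y → y ≤ p →
        a < greedy R p k y with hS
      have hne : S.Nonempty := by
        refine ⟨(R q).min' (hR q), Finset.mem_filter.2 ⟨(R q).min'_mem (hR q),
          fun y hlt hcov hyp => lt_of_lt_of_le (hc _ _ hcov).1 ?_⟩⟩
        exact (R y).min'_le _ (ih y hlt).1
      have hmax : S.max.getD 0 = S.max' hne := by
        rw [← Finset.coe_max']
        rfl
      rw [hmax]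
      have hmem := Finset.mem_filter.1 (S.max'_mem hne)
      exact ⟨hmem.1, fun y hcov hyp => hmem.2 y hcov.lt hcov hyp⟩

open Classical in
theorem greedy_of_not_le {p : P} {k : ℤ} {q : P} (hq : ¬ q ≤ p) :
    greedy R p k q = (R q).max' (hR q) := by
  have hqp : q ≠ p := fun h => hq (h.le)
  rw [greedy_eq, if_neg hqp]
  have : ((R q).filter fun a => ∀ y, q < y → q ⋖ y → y ≤ p →
      a < greedy R p k y) = R q := by
    refine Finset.filter_true_of_mem fun a _ => fun y hlt hcov hyp =>
      (hq (hlt.le.trans hyp)).elim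
  rw [this, ← Finset.coe_max']
  rfl

theorem greedy_lt_of_lt_le (hc : Consistent R hR) {p : P} {k : ℤ} (hk : k ∈ R p) :
    ∀ q₂ q₁ : P, q₁ < q₂ → q₂ ≤ p → greedy R p k q₁ < greedy R p k q₂ := by
  intro q₂
  induction q₂ using (wellFounded_lt (α := P)).induction with
  | _ q₂ ih =>
    intro q₁ h12 h2p
    obtain ⟨c, h1c, hc2⟩ := exists_le_covBy_of_lt h12
    have hstep : greedy R p k c < greedy R p k q₂ :=
      (greedy_spec hc hk c).2 q₂ hc2 h2p
    rcases eq_or_lt_of_le h1c with rfl | hlt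
    · exact hstep
    · exact (ih c hc2.lt q₁ hlt (hc2.le.trans h2p)).trans hstep

end Aux

/-- For a finite poset `P` and restriction function `R`, every `k ∈ R p` is attained
at `p` by some increasing labeling if and only if `R` is consistent. -/

theorem stmt0 {P : Type*} [Fintype P] [PartialOrder P]
    (R : P → Finset ℤ) (hR : ∀ p, (R p).Nonempty) :
    (∀ p : P, ∀ k ∈ R p, ∃ f : P → ℤ, IncLabel R f ∧ f p = k) ↔ Consistent R hR := by
  constructor
  · intro h x y hxy
    constructor
    · obtain ⟨f, hf, hfy⟩ := h y ((R y).min' (hR y)) ((R y).min'_mem (hR y))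
      calc (R x).min' (hR x) ≤ f x := (R x).min'_le _ (hf.1 x)
        _ < f y := hf.2 hxy.lt
        _ = (R y).min' (hR y) := hfy
    · obtain ⟨f, hf, hfx⟩ := h x ((R x).max' (hR x)) ((R x).max'_mem (hR x))
      calc (R x).max' (hR x) = f x := hfx.symm
        _ < f y := hf.2 hxy.lt
        _ ≤ (R y).max' (hR y) := (R y).le_max' _ (hf.1 y)
  · intro hc p k hk
    refine ⟨greedy R p k, ⟨fun q => (greedy_spec (hR := hR) hc hk q).1, ?_⟩, ?_⟩
    · intro q₁ q₂ h12
      by_cases h2p : q₂ ≤ p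
      · exact greedy_lt_of_lt_le (hR := hR) hc hk q₂ q₁ h12 h2p
      · rw [greedy_of_not_le (hR := hR) h2p]
        calc greedy R p k q₁ ≤ (R q₁).max' (hR q₁) :=
              (R q₁).le_max' _ (greedy_spec (hR := hR) hc hk q₁).1
          _ < (R q₂).max' (hR q₂) := max'_lt_max'_of_lt hc q₂ q₁ h12
    · rw [greedy_eq, if_pos rfl]
end

section
/- Let P be a finite poset, R a restriction function on P, and f ∈ Inc_R(P). If there exist two distinct elements of P that are both raisable in f, then f is not a meet-irreducible element of the lattice Inc_R(P). -/
/-- An element `p` is raisable in the increasing labeling `f` if the value of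
`f` at `p` can be strictly increased, keeping all other values fixed, while
remaining an increasing labeling. -/
def Raisable {P : Type*} [PartialOrder P] (R : P → Finset ℤ) (f : P → ℤ) (p : P) : Prop :=
  ∃ g : P → ℤ, IncLabel R g ∧ f p < g p ∧ ∀ p' : P, p' ≠ p → f p' = g p'

/-- `f` is a meet-irreducible element of the lattice `Inc_R(P)` (ordered
pointwise, with meet given by pointwise minimum): it is not the maximum
element, and whenever it is the meet of two elements it equals one of them. -/
def MeetIrred {P : Type*} [PartialOrder P] (R : P → Finset ℤ) (f : P → ℤ) : Prop :=
  IncLabel R f ∧ ¬ (∀ g : P → ℤ, IncLabel R g → ∀ p, g p ≤ f p) ∧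
  ∀ a b : P → ℤ, IncLabel R a → IncLabel R b →
    (f = fun p => min (a p) (b p)) → f = a ∨ f = b

/-- If an increasing labeling has two distinct raisable elements, then it is
not meet irreducible. -/
theorem stmt2 {P : Type*} [Fintype P] [PartialOrder P]
    (R : P → Finset ℤ) (hR : ∀ p, (R p).Nonempty)
    (f : P → ℤ) (hf : IncLabel R f) (p₁ p₂ : P) (hne : p₁ ≠ p₂)
    (h₁ : Raisable R f p₁) (h₂ : Raisable R f p₂) :
    ¬ MeetIrred R f := by
  rintro ⟨_, _, hirr⟩
  obtain ⟨g₁, hg₁, hlt₁, heq₁⟩ := h₁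
  obtain ⟨g₂, hg₂, hlt₂, heq₂⟩ := h₂
  have hmin : f = fun p => min (g₁ p) (g₂ p) := by
    funext p
    by_cases h : p = p₁
    · subst h
      rw [← heq₂ p hne]
      simp [min_eq_right hlt₁.le]
    · by_cases h2 : p = p₂
      · subst h2
        rw [← heq₁ p h]
        simp [min_eq_left hlt₂.le]
      · rw [← heq₁ p h, ← heq₂ p h2, min_self]
  rcases hirr g₁ g₂ hg₁ hg₂ hmin with h | h
  · exact absurd (congrFun h p₁) (ne_of_lt hlt₁)
  · exact absurd (congrFun h p₂) (ne_of_lt hlt₂)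
end

section
/- Let P be a finite poset and R a consistent restriction function on P. Then the labeling f_max defined by f_max(p) = max R(p) for all p ∈ P belongs to Inc_R(P), and it is the unique element of Inc_R(P) having no raisable elements. -/
def maxLabel {P : Type*} (R : P → Finset ℤ) (hR : ∀ p, (R p).Nonempty) (p : P) : ℤ :=
  (R p).max' (hR p)

section

variable {P : Type*} [PartialOrder P] {R : P → Finset ℤ} {hR : ∀ p, (R p).Nonempty}
  {f : P → ℤ} {p : P}

theorem Consistent.strictMono_maxLabel [LocallyFiniteOrder P] (hcons : Consistent R hR) :
    StrictMono (maxLabel R hR) :=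
  (strictMono_iff_forall_covBy _).2 fun x y hxy => (hcons x y hxy).2

theorem IncLabel.le_maxLabel (hf : IncLabel R f) (p : P) : f p ≤ maxLabel R hR p :=
  (R p).le_max' _ (hf.1 p)

theorem incLabel_maxLabel (hmono : StrictMono (maxLabel R hR)) : IncLabel R (maxLabel R hR) :=
  ⟨fun p => (R p).max'_mem (hR p), hmono⟩

theorem not_raisable_maxLabel (p : P) : ¬ Raisable R (maxLabel R hR) p := by
  rintro ⟨g, hg, hlt, -⟩
  exact (hg.le_maxLabel p).not_gt hlt

theorem IncLabel.update_maxLabel [DecidableEq P] (hmono : StrictMono (maxLabel R hR))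
    (hf : IncLabel R f) (habove : ∀ q, p < q → f q = maxLabel R hR q) :
    IncLabel R (Function.update f p (maxLabel R hR p)) := by
  refine ⟨fun q => ?_, fun p₁ p₂ h => ?_⟩
  · rcases eq_or_ne q p with rfl | hq
    · rw [Function.update_self]
      exact (R q).max'_mem (hR q)
    · rw [Function.update_of_ne hq]
      exact hf.1 q
  · rcases eq_or_ne p₁ p with rfl | h₁
    · rw [Function.update_self, Function.update_of_ne h.ne', habove _ h]
      exact hmono h
    · rcases eq_or_ne p₂ p with rfl | h₂
      · rw [Function.update_of_ne h₁, Function.update_self]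
        exact (hf.2 h).trans_le (hf.le_maxLabel p₂)
      · rw [Function.update_of_ne h₁, Function.update_of_ne h₂]
        exact hf.2 h

theorem raisable_of_lt_maxLabel (hmono : StrictMono (maxLabel R hR)) (hf : IncLabel R f)
    (habove : ∀ q, p < q → f q = maxLabel R hR q) (hlt : f p < maxLabel R hR p) :
    Raisable R f p := by
  classical
  exact ⟨_, hf.update_maxLabel hmono habove, by rwa [Function.update_self],
    fun _ hq => (Function.update_of_ne hq _ _).symm⟩

theorem IncLabel.eq_maxLabel_of_forall_not_raisable [Finite P]
    (hmono : StrictMono (maxLabel R hR)) (hf : IncLabel R f) (hnr : ∀ p, ¬ Raisable R f p) :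
    f = maxLabel R hR := by
  have : WellFoundedGT P := Finite.to_wellFoundedGT
  funext p
  induction p using WellFoundedGT.induction with
  | _ p habove =>
    by_contra hne
    exact hnr p (raisable_of_lt_maxLabel hmono hf habove ((hf.le_maxLabel p).lt_of_ne hne))

end

/-- The labeling `p ↦ max R(p)` is an increasing labeling, and it is the
unique increasing labeling with no raisable elements. -/
theorem stmt3 {P : Type*} [Fintype P] [PartialOrder P]
    (R : P → Finset ℤ) (hR : ∀ p, (R p).Nonempty) (hcons : Consistent R hR) :
    IncLabel R (fun p => (R p).max' (hR p)) ∧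
    (∀ p : P, ¬ Raisable R (fun p => (R p).max' (hR p)) p) ∧
    ∀ f : P → ℤ, IncLabel R f → (∀ p : P, ¬ Raisable R f p) →
      f = fun p => (R p).max' (hR p) := by
  classical
  let := Fintype.toLocallyFiniteOrder (α := P)
  have hmono := hcons.strictMono_maxLabel
  exact ⟨incLabel_maxLabel hmono, not_raisable_maxLabel,
    fun _ hf hnr => hf.eq_maxLabel_of_forall_not_raisable hmono hnr⟩
end

section
/- Let P be a finite poset and R a consistent restriction function on P. Every meet-irreducible element f of the lattice Inc_R(P) has exactly one raisable element p(f), and f(p(f)) ≠ max R(p(f)); moreover the map f ↦ (p(f), f(p(f))) is a bijection from the set of meet-irreducible elements of Inc_R(P) onto the set of pairs {(p,k) : p ∈ P, k ∈ R(p), k ≠ max R(p)}. -/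
/-!
Consistency, propagated from covers to all of `<`, lets a labeling be raised at `p` to
`max R(p)` whenever everything above `p` already sits at its maximum; for a meet irreducible
(hence non-top) `f`, a maximal element among those below their maximum is such a `p`. Two
raisable elements `p ≠ q` would split `f` as the meet of its two raisings. If `f` is raised at `p`
to `f'`, then `f = f' ⊓ (f ⊔ g)` for every labeling `g` with `g p ≤ f p`, so `f` is the greatest
labeling with value `f p` at `p`, which gives injectivity. Conversely, labelings are closed under
`⊔`, so for `k ∈ R(p)` there is a greatest labeling with value `k` at `p`; it is meet irreducible,
and it sits at the maximum above `p`, so it is raisable at `p` when `k ≠ max R(p)`.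
-/

section

variable {P : Type*} [PartialOrder P] {R : P → Finset ℤ} {hR : ∀ p, (R p).Nonempty}
  {f g : P → ℤ} {p q : P} {k : ℤ}

namespace Consistent

variable [Finite P] (hcons : Consistent R hR)
include hcons

theorem strictMono_min' : StrictMono fun p => (R p).min' (hR p) := by
  classical
  have := Fintype.ofFinite P
  let := Fintype.toLocallyFiniteOrder (α := P)
  exact (strictMono_iff_forall_covBy _).2 fun x y h => (hcons x y h).1

theorem strictMono_max' : StrictMono fun p => (R p).max' (hR p) := by
  classical
  have := Fintype.ofFinite P
  let := Fintype.toLocallyFiniteOrder (α := P)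
  exact (strictMono_iff_forall_covBy _).2 fun x y h => (hcons x y h).2

end Consistent

theorem IncLabel.sup (hf : IncLabel R f) (hg : IncLabel R g) : IncLabel R (f ⊔ g) := by
  refine ⟨fun p => ?_, fun x y hxy => max_lt_max (hf.2 hxy) (hg.2 hxy)⟩
  rcases max_choice (f p) (g p) with h | h
  · exact (congrArg (· ∈ R p) h).mpr (hf.1 p)
  · exact (congrArg (· ∈ R p) h).mpr (hg.1 p)

theorem IncLabel.update [DecidableEq P] (hf : IncLabel R f) {v : ℤ} (hv : v ∈ R p)
    (hbelow : ∀ x, x < p → f x < v) (habove : ∀ y, p < y → v < f y) :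
    IncLabel R (Function.update f p v) := by
  refine ⟨fun q => ?_, fun x y hxy => ?_⟩
  · by_cases hq : q = p
    · subst hq; simpa using hv
    · simpa [hq] using hf.1 q
  · by_cases hx : x = p
    · subst hx; simpa [hxy.ne'] using habove y hxy
    · by_cases hy : y = p
      · subst hy; simpa [hx] using hbelow x hxy
      · simpa [hx, hy] using hf.2 hxy

theorem setOf_incLabel_finite [Finite P] : {f | IncLabel R f}.Finite :=
  (Set.Finite.pi' fun p => (R p).finite_toSet).subset fun _ hf p => hf.1 p

theorem supClosed_setOf_incLabel_eq : SupClosed {f | IncLabel R f ∧ f p = k} :=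
  fun f ⟨hf, hfp⟩ g ⟨hg, hgp⟩ => ⟨hf.sup hg, by simp [hfp, hgp]⟩

theorem SupClosed.exists_isGreatest {α : Type*} [SemilatticeSup α] {s : Set α} (hs : SupClosed s)
    (hfin : s.Finite) (hne : s.Nonempty) : ∃ a, IsGreatest s a := by
  obtain ⟨a, ha⟩ := hfin.exists_maximal hne
  exact ⟨a, ha.prop, fun b hb => le_sup_right.trans (ha.le_of_ge (hs ha.prop hb) le_sup_left)⟩

theorem Raisable.lt_max' (h : Raisable R f p) (hp : (R p).Nonempty) : f p < (R p).max' hp := by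
  obtain ⟨g, hg, hlt, -⟩ := h
  exact hlt.trans_le ((R p).le_max' _ (hg.1 p))

theorem Raisable.not_forall_le (h : Raisable R f p) : ¬ ∀ g, IncLabel R g → ∀ q, g q ≤ f q := by
  obtain ⟨g, hg, hlt, -⟩ := h
  exact fun htop => (htop g hg p).not_gt hlt

section Consistent

variable [Finite P] (hcons : Consistent R hR)
include hcons

theorem raisable_of_forall_gt_eq_max' (hf : IncLabel R f) (hp : f p < (R p).max' (hR p))
    (habove : ∀ q, p < q → f q = (R q).max' (hR q)) : Raisable R f p := by
  classical
  refine ⟨Function.update f p ((R p).max' (hR p)), hf.update ((R p).max'_mem (hR p))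
    (fun x hx => (hf.2 hx).trans hp) (fun y hy => ?_), by simpa using hp,
    fun q hq => (Function.update_of_ne hq _ f).symm⟩
  rw [habove y hy]
  exact hcons.strictMono_max' hy

theorem exists_incLabel_eq_of_mem (hk : k ∈ R p) :
    ∃ g, IncLabel R g ∧ g p = k ∧ ∀ q, p < q → g q = (R q).max' (hR q) := by
  classical
  set g₀ : P → ℤ := fun q => if q < p then (R q).min' (hR q) else (R q).max' (hR q)
  have hg₀ : IncLabel R g₀ := by
    refine ⟨fun q => ?_, fun x y hxy => ?_⟩
    · by_cases hq : q < p
      · simpa [g₀, hq] using (R q).min'_mem (hR q)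
      · simpa [g₀, hq] using (R q).max'_mem (hR q)
    · by_cases hy : y < p
      · simpa [g₀, hy, hxy.trans hy] using hcons.strictMono_min' hxy
      · by_cases hx : x < p
        · simpa [g₀, hx, hy] using
            ((R x).min'_le_max' (hR x)).trans_lt (hcons.strictMono_max' hxy)
        · simpa [g₀, hx, hy] using hcons.strictMono_max' hxy
  refine ⟨Function.update g₀ p k, hg₀.update hk (fun x hx => ?_) (fun y hy => ?_), by simp,
    fun q hq => by simp [g₀, hq.ne', hq.not_gt]⟩
  · simpa [g₀, hx] using (hcons.strictMono_min' hx).trans_le ((R p).min'_le k hk)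
  · simpa [g₀, hy.not_gt] using ((R p).le_max' k hk).trans_lt (hcons.strictMono_max' hy)

theorem MeetIrred.exists_raisable (hf : MeetIrred R f) : ∃ p, Raisable R f p := by
  obtain ⟨g, hg, p₀, hp₀⟩ : ∃ g, IncLabel R g ∧ ∃ p, f p < g p := by
    simpa using hf.2.1
  obtain ⟨p, hp⟩ := (Set.toFinite {q | f q < (R q).max' (hR q)}).exists_maximal
    ⟨p₀, hp₀.trans_le ((R p₀).le_max' _ (hg.1 p₀))⟩
  refine ⟨p, raisable_of_forall_gt_eq_max' hcons hf.1 hp.prop fun q hpq => ?_⟩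
  exact ((R q).le_max' _ (hf.1.1 q)).eq_or_lt.resolve_right
    fun hq => hpq.not_ge (hp.le_of_ge hq hpq.le)

end Consistent

theorem MeetIrred.raisable_unique (hf : MeetIrred R f) (hp : Raisable R f p)
    (hq : Raisable R f q) : p = q := by
  obtain ⟨g₁, hg₁, hlt₁, heq₁⟩ := hp
  obtain ⟨g₂, hg₂, hlt₂, heq₂⟩ := hq
  by_contra hpq
  have hmeet : f = fun r => min (g₁ r) (g₂ r) := by
    funext r
    by_cases hrp : r = p
    · subst hrp; rw [← heq₂ r hpq, min_eq_right hlt₁.le]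
    · rw [← heq₁ r hrp]
      by_cases hrq : r = q
      · subst hrq; rw [min_eq_left hlt₂.le]
      · rw [← heq₂ r hrq, min_self]
  rcases hf.2.2 g₁ g₂ hg₁ hg₂ hmeet with h | h
  · exact hlt₁.ne (congrFun h p)
  · exact hlt₂.ne (congrFun h q)

theorem MeetIrred.le_of_raisable (hf : MeetIrred R f) (hp : Raisable R f p) (hg : IncLabel R g)
    (hgp : g p ≤ f p) : g ≤ f := by
  obtain ⟨f', hf', hlt, heq⟩ := hp
  have hmeet : f = fun q => min (f' q) ((f ⊔ g) q) := by
    funext q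
    by_cases hq : q = p
    · subst hq; simp [hgp, hlt.le]
    · simp [← heq q hq]
  rcases hf.2.2 f' (f ⊔ g) hf' (hf.1.sup hg) hmeet with h | h
  · exact absurd (congrFun h p) hlt.ne
  · exact h ▸ le_sup_right

theorem meetIrred_of_isGreatest (hf : IsGreatest {g | IncLabel R g ∧ g p = k} f)
    (hraise : Raisable R f p) : MeetIrred R f := by
  refine ⟨hf.1.1, hraise.not_forall_le, fun a b ha hb hab => ?_⟩
  have hmin : min (a p) (b p) = k := (congrFun hab p).symm.trans hf.1.2
  rcases min_choice (a p) (b p) with h | h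
  · exact .inl (le_antisymm (fun q => hab ▸ min_le_left _ _) (hf.2 ⟨ha, h ▸ hmin⟩))
  · exact .inr (le_antisymm (fun q => hab ▸ min_le_right _ _) (hf.2 ⟨hb, h ▸ hmin⟩))

theorem Consistent.exists_meetIrred_raisable_eq [Finite P] (hcons : Consistent R hR)
    (hk : k ∈ R p) (hkmax : k ≠ (R p).max' (hR p)) :
    ∃ f, MeetIrred R f ∧ Raisable R f p ∧ f p = k := by
  obtain ⟨g₀, hg₀, hg₀p, hg₀above⟩ := exists_incLabel_eq_of_mem hcons hk
  obtain ⟨f, hf⟩ := supClosed_setOf_incLabel_eq.exists_isGreatest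
    (setOf_incLabel_finite.subset fun _ h => h.1) ⟨g₀, hg₀, hg₀p⟩
  have hraise : Raisable R f p := by
    refine raisable_of_forall_gt_eq_max' hcons hf.1.1
      (hf.1.2 ▸ ((R p).le_max' k hk).lt_of_ne hkmax) fun q hpq => ?_
    exact le_antisymm ((R q).le_max' _ (hf.1.1.1 q)) (hg₀above q hpq ▸ hf.2 ⟨hg₀, hg₀p⟩ q)
  exact ⟨f, meetIrred_of_isGreatest hf hraise, hraise, hf.1.2⟩

end

/-- Every meet-irreducible increasing labeling `f` has exactly one raisable
element `p(f)`, its value there is not `max R(p(f))`, and the assignment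
`f ↦ (p(f), f(p(f)))` is a bijection from the set of meet irreducibles of
`Inc_R(P)` onto the pairs `(p,k)` with `k ∈ R(p)`, `k ≠ max R(p)`. -/
theorem stmt5 {P : Type*} [Fintype P] [PartialOrder P]
    (R : P → Finset ℤ) (hR : ∀ p, (R p).Nonempty) (hcons : Consistent R hR) :
    (∀ f : P → ℤ, MeetIrred R f → ∃! p : P, Raisable R f p) ∧
    (∀ f : P → ℤ, ∀ p : P, MeetIrred R f → Raisable R f p →
      f p ∈ R p ∧ f p ≠ (R p).max' (hR p)) ∧
    (∀ f g : P → ℤ, ∀ p : P, MeetIrred R f → MeetIrred R g →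
      Raisable R f p → Raisable R g p → f p = g p → f = g) ∧
    (∀ p : P, ∀ k : ℤ, k ∈ R p → k ≠ (R p).max' (hR p) →
      ∃ f : P → ℤ, MeetIrred R f ∧ Raisable R f p ∧ f p = k) := by
  refine ⟨fun f hf => ?_, fun f p hf hrais => ⟨hf.1.1 p, (hrais.lt_max' (hR p)).ne⟩,
    fun f g p hf hg hrf hrg hfg => ?_, fun p k => hcons.exists_meetIrred_raisable_eq⟩
  · obtain ⟨p, hp⟩ := hf.exists_raisable hcons
    exact ⟨p, hp, fun q hq => hf.raisable_unique hq hp⟩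
  · exact le_antisymm (hg.le_of_raisable hrg hf.1 hfg.le) (hf.le_of_raisable hrf hg.1 hfg.ge)
end

section
/- Let P be a finite poset and q a positive integer such that δ(p) + ν(p) + 1 ≤ q for every p ∈ P. Then the map R assigning to each p the integer interval R(p) = {1+δ(p), 2+δ(p), …, q−ν(p)} is a consistent restriction function, and Inc_R(P) = Inc_q(P); in particular every f ∈ Inc_q(P) satisfies 1+δ(p) ≤ f(p) ≤ q−ν(p) for all p. -/
/-- `δ(p)`: the maximum number of elements strictly below `p` in a chain of
`P` through `p`, i.e. the length of a longest chain in `{x | x < p}`. -/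
noncomputable def deltaP {P : Type*} [PartialOrder P] (p : P) : ℕ :=
  (Set.chainHeight {x : P | x < p} (· < ·)).toNat

/-- `ν(p)`: the maximum number of elements strictly above `p` in a chain of
`P` through `p`, i.e. the length of a longest chain in `{x | p < x}`. -/
noncomputable def nuP {P : Type*} [PartialOrder P] (p : P) : ℕ :=
  (Set.chainHeight {x : P | p < x} (· < ·)).toNat

/-
An increasing labelling `f` with values `≥ m` is injective on every chain below `p`, and maps it
into `[m, f p)`; so `δ(p) ≤ f p - m`. Dually `ν(p) ≤ M - f p` when `f ≤ M`, which gives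
`Inc_q(P) ⊆ Inc_R(P)`. Consistency holds because `δ` is strictly increasing and `ν` strictly
decreasing: a longest chain below `x` extends by `x` to a chain below `y` whenever `x < y`.
-/

open OrderDual

namespace Finset

theorem min'_Icc {α : Type*} [LinearOrder α] [LocallyFiniteOrder α] {a b : α}
    (h : (Icc a b).Nonempty) : (Icc a b).min' h = a :=
  (isLeast_min' _ h).unique (by simpa using isLeast_Icc (nonempty_Icc.1 h))

theorem max'_Icc {α : Type*} [LinearOrder α] [LocallyFiniteOrder α] {a b : α}
    (h : (Icc a b).Nonempty) : (Icc a b).max' h = b :=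
  (isGreatest_max' _ h).unique (by simpa using isGreatest_Icc (nonempty_Icc.1 h))

end Finset

section ChainHeights

variable {P : Type*} [PartialOrder P]

theorem deltaP_toDual (p : P) : deltaP (toDual p) = nuP p :=
  congrArg ENat.toNat (Set.chainHeight_flip {x : P | p < x} (· < ·))

theorem deltaP_strictMono [Finite P] : StrictMono (deltaP : P → ℕ) := by
  intro x y hxy
  obtain ⟨t, hts, hte, htc⟩ :=
    Set.exists_eq_chainHeight_of_finite {z : P | z < x} (· < ·) (Set.toFinite _)
  have hxt : x ∉ t := fun h => lt_irrefl x (hts h)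
  have hsub : insert x t ⊆ {z : P | z < y} := by
    rintro z (rfl | hz)
    · exact hxy
    · exact (hts hz).trans hxy
  have hchain : IsChain (· < ·) (insert x t) := htc.insert fun b hb _ => Or.inr (hts hb)
  have hcoe (z : P) : (deltaP z : ℕ∞) = {w : P | w < z}.chainHeight (· < ·) :=
    ENat.natCast_toNat (Set.chainHeight_ne_top_of_finite _ _ (Set.toFinite _))
  have key : (deltaP x : ℕ∞) + 1 ≤ deltaP y := by
    rw [hcoe, hcoe, ← hte, ← Set.encard_insert_of_notMem hxt]
    exact Set.encard_le_chainHeight_of_isChain _ _ hsub hchain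
  exact_mod_cast key

theorem nuP_strictAnti [Finite P] : StrictAnti (nuP : P → ℕ) := fun x y hxy => by
  have := deltaP_strictMono (show toDual y < toDual x from hxy)
  rwa [deltaP_toDual, deltaP_toDual] at this

theorem StrictMono.deltaP_add_le {f : P → ℤ} (hf : StrictMono f) {m : ℤ} (hm : ∀ x, m ≤ f x)
    (p : P) : (deltaP p : ℤ) + m ≤ f p := by
  have hchain : {x : P | x < p}.chainHeight (· < ·) ≤ ((f p - m).toNat : ℕ∞) := by
    refine iSup_le fun ⟨t, hts, htc⟩ => ?_
    have hinj : Set.InjOn f t := fun a ha b hb hfab => by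
      by_contra hab
      rcases htc ha hb hab with h | h
      exacts [(hf h).ne hfab, (hf h).ne' hfab]
    have hmaps : Set.MapsTo f t (Finset.Ico m (f p) : Set ℤ) := fun a ha => by
      simpa using ⟨hm a, hf (hts ha)⟩
    simpa only [Set.encard_coe_eq_coe_finsetCard, Int.card_Ico] using
      Set.encard_le_encard_of_injOn hmaps hinj
  have := ENat.toNat_le_of_le_natCast hchain
  have := hm p
  unfold deltaP
  omega

theorem StrictMono.add_nuP_le {f : P → ℤ} (hf : StrictMono f) {M : ℤ} (hM : ∀ x, f x ≤ M)
    (p : P) : f p + nuP p ≤ M := by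
  have hdual : StrictMono fun x : Pᵒᵈ => -f (ofDual x) := fun a b hab => neg_lt_neg (hf hab)
  have := hdual.deltaP_add_le (m := -M) (fun x => neg_le_neg (hM (ofDual x))) (toDual p)
  rw [deltaP_toDual] at this
  simp only [ofDual_toDual] at this
  omega

end ChainHeights

theorem stmt8_general {P : Type*} [Fintype P] [PartialOrder P] (q : ℕ)
    (hch : ∀ p : P, deltaP p + nuP p + 1 ≤ q) :
    ∃ hne : ∀ p : P, (Finset.Icc (1 + (deltaP p : ℤ)) ((q : ℤ) - (nuP p : ℤ))).Nonempty,
      Consistent (fun p => Finset.Icc (1 + (deltaP p : ℤ)) ((q : ℤ) - (nuP p : ℤ))) hne ∧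
      ∀ f : P → ℤ,
        IncLabel (fun p => Finset.Icc (1 + (deltaP p : ℤ)) ((q : ℤ) - (nuP p : ℤ))) f ↔
          ((∀ p : P, 1 ≤ f p ∧ f p ≤ (q : ℤ)) ∧
            ∀ ⦃p₁ p₂ : P⦄, p₁ < p₂ → f p₁ < f p₂) := by
  have hle (p : P) : 1 + (deltaP p : ℤ) ≤ q - nuP p := by have := hch p; omega
  refine ⟨fun p => Finset.nonempty_Icc.2 (hle p), fun x y hxy => ?_, fun f => ?_⟩
  · simp only [Finset.min'_Icc, Finset.max'_Icc]
    have := deltaP_strictMono hxy.lt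
    have := nuP_strictAnti hxy.lt
    omega
  · constructor
    · rintro ⟨hmem, hf⟩
      refine ⟨fun p => ?_, hf⟩
      have := Finset.mem_Icc.1 (hmem p)
      omega
    · rintro ⟨hbd, hf⟩
      refine ⟨fun p => Finset.mem_Icc.2 ⟨?_, ?_⟩, hf⟩
      · have := StrictMono.deltaP_add_le hf (fun x => (hbd x).1) p
        omega
      · have := StrictMono.add_nuP_le hf (fun x => (hbd x).2) p
        omega

/-- If every chain through `p` has at most `q` elements (`δ(p)+ν(p)+1 ≤ q`),
then `R(p) = [1+δ(p), q−ν(p)]` is a consistent restriction function, and the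
increasing labelings restricted by `R` are exactly the increasing labelings
with values in `[1,q]`; in particular every `f ∈ Inc_q(P)` satisfies
`1+δ(p) ≤ f p ≤ q−ν(p)`. -/
theorem stmt8 {P : Type*} [Fintype P] [PartialOrder P] (q : ℕ) (hq : 0 < q)
    (hch : ∀ p : P, deltaP p + nuP p + 1 ≤ q) :
    ∃ hne : ∀ p : P, (Finset.Icc (1 + (deltaP p : ℤ)) ((q : ℤ) - (nuP p : ℤ))).Nonempty,
      Consistent (fun p => Finset.Icc (1 + (deltaP p : ℤ)) ((q : ℤ) - (nuP p : ℤ))) hne ∧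
      ∀ f : P → ℤ,
        IncLabel (fun p => Finset.Icc (1 + (deltaP p : ℤ)) ((q : ℤ) - (nuP p : ℤ))) f ↔
          ((∀ p : P, 1 ≤ f p ∧ f p ≤ (q : ℤ)) ∧
            ∀ ⦃p₁ p₂ : P⦄, p₁ < p₂ → f p₁ < f p₂) :=
  stmt8_general q hch
end

section
/- Let P be a finite poset and q a positive integer. For every f ∈ Inc_q(P), Bender-Knuth promotion equals jeu de taquin promotion: Pro(f) = JdtPro(f). -/
/-- `Inc_q(P)`: increasing labelings of `P` with labels in `{1,…,q}`. -/
def IncQ {P : Type*} [PartialOrder P] (q : ℕ) (f : P → ℤ) : Prop :=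
  (∀ p, 1 ≤ f p ∧ f p ≤ (q : ℤ)) ∧ ∀ ⦃p₁ p₂ : P⦄, p₁ < p₂ → f p₁ < f p₂

open Classical in
/-- The `i`-th Bender-Knuth involution on `Inc_q(P)`: change a label `i` to
`i+1`, and a label `i+1` to `i`, wherever possible. -/
noncomputable def bkQ {P : Type*} [PartialOrder P] [DecidableEq P] (q : ℕ) (i : ℤ)
    (f : P → ℤ) : P → ℤ := fun p =>
  if f p = i ∧ IncQ q (Function.update f p (i + 1)) then i + 1
  else if f p = i + 1 ∧ IncQ q (Function.update f p i) then i
  else f p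

/-- Bender-Knuth promotion `Pro = ρ_{q−1} ∘ ⋯ ∘ ρ₂ ∘ ρ₁` on `Inc_q(P)`. -/
noncomputable def proQ {P : Type*} [PartialOrder P] [DecidableEq P] (q : ℕ)
    (f : P → ℤ) : P → ℤ :=
  (List.range (q - 1)).foldl (fun g j => bkQ q ((j : ℤ) + 1) g) f

open Classical in
/-- The `i`-th jeu de taquin slide on labelings `P → ℤ ∪ {□}`, with `□`
encoded by `none`: an empty label becomes `i` if some cover is labeled `i`,
and a label `i` becomes empty if some element covered is empty. -/
noncomputable def slideQ {P : Type*} [PartialOrder P] (i : ℤ)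
    (g : P → Option ℤ) : P → Option ℤ := fun x =>
  if g x = none ∧ ∃ y, x ⋖ y ∧ g y = some i then some i
  else if g x = some i ∧ ∃ z, z ⋖ x ∧ g z = none then none
  else g x

/-- Jeu de taquin promotion: replace all labels `1` by `□`, apply the slides
`σ₂, …, σ_q` in order, replace all `□` by `q+1`, then subtract `1`. -/
noncomputable def jdtProQ {P : Type*} [PartialOrder P] [DecidableEq P] (q : ℕ)
    (f : P → ℤ) : P → ℤ := fun x =>
  (((List.range (q - 1)).foldl (fun g j => slideQ ((j : ℤ) + 2) g)
      (fun y => if f y = 1 then none else some (f y))) x).getD ((q : ℤ) + 1) - 1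

/-!
Both promotions are built one step at a time, and after `k` steps they still describe the same
labeling: if `g = ρ_k ∘ ⋯ ∘ ρ₁ f`, then `σ_{k+1} ∘ ⋯ ∘ σ₂ ∘ σ_{1→□} f` has its hole exactly where
`g` takes the value `k + 1`, the value `v + 1` where `g` takes a value `v ≤ k`, and agrees with `g`
elsewhere. The inductive step is a local comparison: a label `k + 1` of `g` is raised by `ρ_{k+1}`
iff no cover of it is labeled `k + 2`, which is exactly when the slide `σ_{k+2}` leaves the hole in
place, and dually for a label `k + 2`.
-/

section BenderKnuth

variable {P : Type*} [PartialOrder P]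

theorem covBy_of_strictMono_of_eq_add_one {g : P → ℤ} (hg : StrictMono g) {x y : P}
    (hxy : x < y) (h : g y = g x + 1) : x ⋖ y :=
  ⟨hxy, fun z hxz hzy => by have := hg hxz; have := hg hzy; omega⟩

variable [DecidableEq P] {q : ℕ} {g : P → ℤ}

theorem incQ_update_iff (hg : IncQ q g) (p : P) (v : ℤ) :
    IncQ q (Function.update g p v) ↔
      (1 ≤ v ∧ v ≤ q) ∧ (∀ y, p < y → v < g y) ∧ ∀ z, z < p → g z < v := by
  constructor
  · rintro ⟨hb, hm⟩
    refine ⟨by simpa using hb p, fun y hy => ?_, fun z hz => ?_⟩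
    · simpa [hy.ne'] using hm hy
    · simpa [hz.ne] using hm hz
  · rintro ⟨hv, hup, hdown⟩
    refine ⟨fun x => ?_, fun a b hab => ?_⟩
    · rw [Function.update_apply]
      split_ifs
      exacts [hv, hg.1 x]
    · have hlt := hg.2 hab
      simp only [Function.update_apply]
      split_ifs with ha hb hb
      · subst ha hb
        exact absurd hab (lt_irrefl _)
      exacts [hup b (ha ▸ hab), hdown a (hb ▸ hab), hlt]

variable {i : ℤ} {p : P}

theorem incQ_update_add_one_iff (hg : IncQ q g) (hi : 1 ≤ i) (hiq : i + 1 ≤ q) (hp : g p = i) :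
    IncQ q (Function.update g p (i + 1)) ↔ ¬∃ y, p ⋖ y ∧ g y = i + 1 := by
  rw [incQ_update_iff hg]
  constructor
  · rintro ⟨-, hup, -⟩ ⟨y, hy, hgy⟩
    exact (hup y hy.1).ne hgy.symm
  · intro h
    refine ⟨by omega, fun y hy => ?_, fun z hz => by have := hg.2 hz; omega⟩
    have := hg.2 hy
    by_contra hle
    exact h ⟨y, covBy_of_strictMono_of_eq_add_one hg.2 hy (by omega), by omega⟩

theorem incQ_update_sub_one_iff (hg : IncQ q g) (hi : 1 ≤ i) (hiq : i + 1 ≤ q)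
    (hp : g p = i + 1) :
    IncQ q (Function.update g p i) ↔ ¬∃ z, z ⋖ p ∧ g z = i := by
  rw [incQ_update_iff hg]
  constructor
  · rintro ⟨-, -, hdown⟩ ⟨z, hz, hgz⟩
    exact (hdown z hz.1).ne hgz
  · intro h
    refine ⟨by omega, fun y hy => by have := hg.2 hy; omega, fun z hz => ?_⟩
    have := hg.2 hz
    by_contra hle
    exact h ⟨z, covBy_of_strictMono_of_eq_add_one hg.2 hz (by omega), by omega⟩

open Classical in
theorem bkQ_apply (hg : IncQ q g) (hi : 1 ≤ i) (hiq : i + 1 ≤ q) (p : P) :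
    bkQ q i g p =
      if g p = i then (if ∃ y, p ⋖ y ∧ g y = i + 1 then i else i + 1)
      else if g p = i + 1 then (if ∃ z, z ⋖ p ∧ g z = i then i + 1 else i)
      else g p := by
  unfold bkQ
  by_cases h₁ : g p = i
  · rw [incQ_update_add_one_iff hg hi hiq h₁]
    split_ifs <;> first | rfl | omega | simp_all
  · by_cases h₂ : g p = i + 1
    · rw [incQ_update_sub_one_iff hg hi hiq h₂]
      split_ifs <;> first | rfl | omega | simp_all
    · split_ifs <;> first | rfl | omega

theorem incQ_bkQ (hg : IncQ q g) (hi : 1 ≤ i) (hiq : i + 1 ≤ q) : IncQ q (bkQ q i g) := by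
  refine ⟨fun p => ?_, fun a b hab => ?_⟩
  · have := hg.1 p
    rw [bkQ_apply hg hi hiq]
    split_ifs <;> omega
  · have hlt := hg.2 hab
    -- the only pair that could swap order is a cover, and then neither label moves
    have hcov (ha : g a = i) (hb : g b = i + 1) : a ⋖ b :=
      covBy_of_strictMono_of_eq_add_one hg.2 hab (by omega)
    rw [bkQ_apply hg hi hiq, bkQ_apply hg hi hiq]
    split_ifs <;> first | omega | simp_all

end BenderKnuth

section JeuDeTaquin

def jdtLabel (k v : ℤ) : Option ℤ :=
  if v = k + 1 then none else some (if v ≤ k then v + 1 else v)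

theorem jdtLabel_eq_none_iff {k v : ℤ} : jdtLabel k v = none ↔ v = k + 1 := by
  unfold jdtLabel; split_ifs <;> simp_all

theorem jdtLabel_eq_some_add_two_iff {k v : ℤ} :
    jdtLabel k v = some (k + 2) ↔ v = k + 1 + 1 := by
  unfold jdtLabel; split_ifs <;> simp <;> omega

theorem jdtLabel_getD_sub_one {k v : ℤ} (hv : 1 ≤ v ∧ v ≤ k + 1) :
    (jdtLabel k v).getD (k + 2) - 1 = v := by
  unfold jdtLabel
  split_ifs <;> simp <;> omega

variable {P : Type*} [PartialOrder P] [DecidableEq P] {q : ℕ} {g : P → ℤ}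

theorem slideQ_jdtLabel (hg : IncQ q g) {k : ℤ} (hk : 0 ≤ k) (hkq : k + 2 ≤ q) (x : P) :
    slideQ (k + 2) (fun y => jdtLabel k (g y)) x = jdtLabel (k + 1) (bkQ q (k + 1) g x) := by
  classical
  unfold slideQ
  simp only [jdtLabel_eq_none_iff, jdtLabel_eq_some_add_two_iff]
  rw [bkQ_apply hg (by omega) (by omega)]
  split_ifs <;> simp_all [jdtLabel] <;> omega

theorem foldl_range_succ_intCast {α : Type*} (F : α → ℤ → α) (a : α) (n : ℕ) :
    (List.range (n + 1)).foldl (fun g (j : ℤ) => F g j) a =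
      F ((List.range n).foldl (fun g (j : ℤ) => F g j) a) n := by
  simp [List.range_succ]

theorem incQ_foldl_bkQ {f : P → ℤ} (hf : IncQ q f) :
    ∀ n ≤ q - 1, IncQ q ((List.range n).foldl (fun g j => bkQ q ((j : ℤ) + 1) g) f)
  | 0, _ => hf
  | n + 1, hn => by
    rw [foldl_range_succ_intCast]
    exact incQ_bkQ (incQ_foldl_bkQ hf n (by omega)) (by omega) (by omega)

theorem foldl_slideQ_eq_jdtLabel {f : P → ℤ} (hf : IncQ q f) :
    ∀ n ≤ q - 1,
      (List.range n).foldl (fun g j => slideQ ((j : ℤ) + 2) g)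
          (fun y => if f y = 1 then none else some (f y)) =
        fun x => jdtLabel n ((List.range n).foldl (fun g j => bkQ q ((j : ℤ) + 1) g) f x)
  | 0, _ => by
    funext y
    have : ¬f y ≤ 0 := by have := (hf.1 y).1; omega
    simp [jdtLabel, this]
  | n + 1, hn => by
    rw [foldl_range_succ_intCast, foldl_range_succ_intCast,
      foldl_slideQ_eq_jdtLabel hf n (by omega)]
    funext x
    push_cast
    exact slideQ_jdtLabel (incQ_foldl_bkQ hf n (by omega)) (by positivity) (by omega) x

end JeuDeTaquin

theorem stmt10_general {P : Type*} [PartialOrder P] [DecidableEq P]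
    (q : ℕ) (f : P → ℤ) (hf : IncQ q f) :
    proQ q f = jdtProQ q f := by
  funext x
  have hv := (incQ_foldl_bkQ hf (q - 1) le_rfl).1 x
  have hq : ((q - 1 : ℕ) : ℤ) + 2 = q + 1 := by omega
  unfold proQ jdtProQ
  simp only [foldl_slideQ_eq_jdtLabel hf (q - 1) le_rfl, ← hq]
  rw [jdtLabel_getD_sub_one (by omega)]

/-- Bender-Knuth promotion equals jeu de taquin promotion on `Inc_q(P)`. -/
theorem stmt10 {P : Type*} [Fintype P] [PartialOrder P] [DecidableEq P]
    (q : ℕ) (hq : 0 < q) (f : P → ℤ) (hf : IncQ q f) :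
    proQ q f = jdtProQ q f :=
  stmt10_general q f hf
end

section
/- Let P be a finite poset and q a positive integer. For f ∈ Inc_q(P), define the binary content Con(f) ∈ {0,1}^q by Con(f)_i = 1 if i lies in the image of f and Con(f)_i = 0 otherwise. Then for every f ∈ Inc_q(P), Con(Pro(f)) is the cyclic shift of Con(f): Con(Pro(f))_i = Con(f)_{i+1} for 1 ≤ i ≤ q−1, and Con(Pro(f))_q = Con(f)_1. -/
section Aux
variable {P : Type*} [PartialOrder P] [DecidableEq P] {q : ℕ} {f : P → ℤ} {p : P} {v i : ℤ}

lemma incQ_update_forall (h : IncQ q (Function.update f p v)) :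
    (∀ p', p' < p → f p' < v) ∧ (∀ p', p < p' → v < f p') := by
  constructor
  · intro p' hp'
    have := h.2 hp'
    rwa [Function.update_self, Function.update_of_ne (ne_of_lt hp')] at this
  · intro p' hp'
    have := h.2 hp'
    rwa [Function.update_self, Function.update_of_ne (ne_of_gt hp')] at this

lemma incQ_update_of (hf : IncQ q f) (hv1 : 1 ≤ v) (hv2 : v ≤ (q : ℤ))
    (h1 : ∀ p', p' < p → f p' < v) (h2 : ∀ p', p < p' → v < f p') :
    IncQ q (Function.update f p v) := by
  constructor
  · intro p'
    by_cases hpp : p' = p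
    · subst hpp; simp [hv1, hv2]
    · rw [Function.update_of_ne hpp]; exact hf.1 p'
  · intro p₁ p₂ hlt
    by_cases e1 : p₁ = p
    · subst e1
      rw [Function.update_self, Function.update_of_ne (ne_of_gt hlt)]
      exact h2 _ hlt
    · by_cases e2 : p₂ = p
      · subst e2
        rw [Function.update_self, Function.update_of_ne e1]
        exact h1 _ hlt
      · rw [Function.update_of_ne e1, Function.update_of_ne e2]
        exact hf.2 hlt

lemma bkQ_spec (p : P) :
    (f p = i ∧ IncQ q (Function.update f p (i + 1)) ∧ bkQ q i f p = i + 1) ∨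
    (f p = i + 1 ∧ IncQ q (Function.update f p i) ∧ bkQ q i f p = i) ∨
    (¬(f p = i ∧ IncQ q (Function.update f p (i + 1))) ∧
      ¬(f p = i + 1 ∧ IncQ q (Function.update f p i)) ∧ bkQ q i f p = f p) := by
  unfold bkQ
  split_ifs with h1 h2
  · exact Or.inl ⟨h1.1, h1.2, rfl⟩
  · exact Or.inr (Or.inl ⟨h2.1, h2.2, rfl⟩)
  · exact Or.inr (Or.inr ⟨h1, h2, rfl⟩)

lemma bkQ_incQ (hf : IncQ q f) : IncQ q (bkQ q i f) := by
  refine ⟨fun p => ?_, fun p₁ p₂ hlt => ?_⟩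
  · rcases bkQ_spec (q := q) (i := i) (f := f) p with ⟨_, h, hg⟩ | ⟨_, h, hg⟩ | ⟨_, _, hg⟩
    · rw [hg]; have := h.1 p; rwa [Function.update_self] at this
    · rw [hg]; have := h.1 p; rwa [Function.update_self] at this
    · rw [hg]; exact hf.1 p
  · have hmono := hf.2 hlt
    rcases bkQ_spec (q := q) (i := i) (f := f) p₁ with
        ⟨hf1, hu1, hg1⟩ | ⟨hf1, hu1, hg1⟩ | ⟨_, _, hg1⟩ <;>
      rcases bkQ_spec (q := q) (i := i) (f := f) p₂ with
        ⟨hf2, hu2, hg2⟩ | ⟨hf2, hu2, hg2⟩ | ⟨_, _, hg2⟩ <;>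
      rw [hg1, hg2]
    · linarith
    · have := (incQ_update_forall hu1).2 p₂ hlt; linarith
    · have := (incQ_update_forall hu1).2 p₂ hlt; linarith
    · linarith
    · linarith
    · linarith
    · linarith
    · have := (incQ_update_forall hu2).1 p₁ hlt; linarith
    · exact hmono

lemma bkQ_content_other (j : ℤ) (hj : j ≠ i) (hj' : j ≠ i + 1) :
    (∃ p, bkQ q i f p = j) ↔ ∃ p, f p = j := by
  constructor
  · rintro ⟨p, hp⟩
    rcases bkQ_spec (q := q) (i := i) (f := f) p with ⟨_, _, hg⟩ | ⟨_, _, hg⟩ | ⟨_, _, hg⟩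
    · rw [hg] at hp; exact absurd hp.symm hj'
    · rw [hg] at hp; exact absurd hp.symm hj
    · rw [hg] at hp; exact ⟨p, hp⟩
  · rintro ⟨p, hp⟩
    rcases bkQ_spec (q := q) (i := i) (f := f) p with ⟨h, _, hg⟩ | ⟨h, _, hg⟩ | ⟨_, _, hg⟩
    · exact absurd (hp ▸ h) hj
    · exact absurd (hp ▸ h) hj'
    · exact ⟨p, hg.trans hp⟩

lemma bkQ_content_lo (hf : IncQ q f) (hi1 : 1 ≤ i) (hi2 : i + 1 ≤ (q : ℤ)) :
    (∃ p, bkQ q i f p = i) ↔ ∃ p, f p = i + 1 := by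
  constructor
  · rintro ⟨p, hp⟩
    rcases bkQ_spec (q := q) (i := i) (f := f) p with ⟨_, _, hg⟩ | ⟨h, _, _⟩ | ⟨hn1, _, hg⟩
    · rw [hg] at hp; exact absurd hp (by omega)
    · exact ⟨p, h⟩
    · rw [hg] at hp
      -- hp : f p = i ; the raise at p is blocked
      by_contra hcon
      push_neg at hcon
      have hno : ¬ IncQ q (Function.update f p (i + 1)) := fun h' => hn1 ⟨hp, h'⟩
      refine hno (incQ_update_of hf (by omega) hi2 ?_ ?_)
      · intro p' hp'
        have := hf.2 hp'
        omega
      · intro p' hp'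
        have h3 := hf.2 hp'
        have h4 := hcon p'
        omega
  · rintro ⟨p, hp⟩
    by_cases hc : ∃ p', f p' = i + 1 ∧ IncQ q (Function.update f p' i)
    · obtain ⟨p', h', hu⟩ := hc
      rcases bkQ_spec (q := q) (i := i) (f := f) p' with ⟨h, _, _⟩ | ⟨_, _, hg⟩ | ⟨hn1, hn2, _⟩
      · exact absurd (h.symm.trans h') (by omega)
      · exact ⟨p', hg⟩
      · exact absurd ⟨h', hu⟩ hn2
    · -- the lowering at p is blocked, so some p' < p has f p' = i and cannot be raised
      have hno : ¬ IncQ q (Function.update f p i) := fun h' => hc ⟨p, hp, h'⟩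
      have hB : ∀ p', p < p' → i < f p' := by
        intro p' hp'
        have := hf.2 hp'
        omega
      have hA : ¬ ∀ p', p' < p → f p' < i := by
        intro hA
        exact hno (incQ_update_of hf hi1 (by omega) hA hB)
      push_neg at hA
      obtain ⟨p', hp'lt, hp'ge⟩ := hA
      have hp'eq : f p' = i := by
        have := hf.2 hp'lt
        omega
      rcases bkQ_spec (q := q) (i := i) (f := f) p' with ⟨_, hu, _⟩ | ⟨h, _, _⟩ | ⟨_, _, hg⟩
      · have := (incQ_update_forall hu).2 p hp'lt
        omega
      · exact absurd (hp'eq.symm.trans h) (by omega)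
      · exact ⟨p', hg.trans hp'eq⟩

lemma bkQ_content_hi (hf : IncQ q f) (hi1 : 1 ≤ i) (hi2 : i + 1 ≤ (q : ℤ)) :
    (∃ p, bkQ q i f p = i + 1) ↔ ∃ p, f p = i := by
  constructor
  · rintro ⟨p, hp⟩
    rcases bkQ_spec (q := q) (i := i) (f := f) p with ⟨h, _, _⟩ | ⟨_, _, hg⟩ | ⟨_, hn2, hg⟩
    · exact ⟨p, h⟩
    · rw [hg] at hp; exact absurd hp (by omega)
    · rw [hg] at hp
      -- hp : f p = i + 1 ; the lowering at p is blocked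
      have hno : ¬ IncQ q (Function.update f p i) := fun h' => hn2 ⟨hp, h'⟩
      have hB : ∀ p', p < p' → i < f p' := by
        intro p' hp'
        have := hf.2 hp'
        omega
      have hA : ¬ ∀ p', p' < p → f p' < i := by
        intro hA
        exact hno (incQ_update_of hf hi1 (by omega) hA hB)
      push_neg at hA
      obtain ⟨p', hp'lt, hp'ge⟩ := hA
      have := hf.2 hp'lt
      exact ⟨p', by omega⟩
  · rintro ⟨p, hp⟩
    by_cases hc : ∃ p', f p' = i ∧ IncQ q (Function.update f p' (i + 1))
    · obtain ⟨p', h', hu⟩ := hc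
      rcases bkQ_spec (q := q) (i := i) (f := f) p' with ⟨_, _, hg⟩ | ⟨h, _, _⟩ | ⟨hn1, _, _⟩
      · exact ⟨p', hg⟩
      · exact absurd (h.symm.trans h') (by omega)
      · exact absurd ⟨h', hu⟩ hn1
    · -- the raise at p is blocked, so some p' > p has f p' = i + 1 and cannot be lowered
      have hno : ¬ IncQ q (Function.update f p (i + 1)) := fun h' => hc ⟨p, hp, h'⟩
      have hA : ∀ p', p' < p → f p' < i + 1 := by
        intro p' hp'
        have := hf.2 hp'
        omega
      have hB : ¬ ∀ p', p < p' → i + 1 < f p' := by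
        intro hB
        exact hno (incQ_update_of hf (by omega) hi2 hA hB)
      push_neg at hB
      obtain ⟨p', hp'lt, hp'le⟩ := hB
      have hp'eq : f p' = i + 1 := by
        have := hf.2 hp'lt
        omega
      rcases bkQ_spec (q := q) (i := i) (f := f) p' with ⟨h, _, _⟩ | ⟨_, hu, _⟩ | ⟨_, _, hg⟩
      · exact absurd (hp'eq.symm.trans h) (by omega)
      · have := (incQ_update_forall hu).1 p hp'lt
        omega
      · exact ⟨p', hg.trans hp'eq⟩


lemma foldl_bind_eq (l : List ℕ) (f : P → ℤ) :
    List.foldl (fun g (j : ℤ) => bkQ q (j + 1) g) f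
      (l >>= fun a => pure ((a : ℕ) : ℤ)) =
    List.foldl (fun g (j : ℕ) => bkQ q ((j : ℤ) + 1) g) f l := by
  induction l generalizing f with
  | nil => rfl
  | cons a l ih => simpa using ih (bkQ q ((a : ℤ) + 1) f)

lemma pro_invariant (hf : IncQ q f) :
    ∀ k : ℕ, k + 1 ≤ q →
      IncQ q ((List.range k).foldl (fun g (j : ℕ) => bkQ q ((j : ℤ) + 1) g) f) ∧
      (∀ j : ℤ, 1 ≤ j → j ≤ (k : ℤ) →
        ((∃ p, (List.range k).foldl (fun g (j : ℕ) => bkQ q ((j : ℤ) + 1) g) f p = j) ↔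
          ∃ p, f p = j + 1)) ∧
      ((∃ p, (List.range k).foldl (fun g (j : ℕ) => bkQ q ((j : ℤ) + 1) g) f p = (k : ℤ) + 1) ↔
        ∃ p, f p = 1) ∧
      (∀ j : ℤ, (k : ℤ) + 1 < j →
        ((∃ p, (List.range k).foldl (fun g (j : ℕ) => bkQ q ((j : ℤ) + 1) g) f p = j) ↔
          ∃ p, f p = j)) := by
  intro k
  induction k with
  | zero =>
    intro _
    refine ⟨hf, ?_, ?_, ?_⟩
    · intro j hj1 hj2; omega
    · simp
    · intro j _; simp
  | succ k ih =>
    intro hk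
    obtain ⟨ih1, ih2, ih3, ih4⟩ := ih (by omega)
    have hfold : (List.range (k + 1)).foldl (fun g (j : ℕ) => bkQ q ((j : ℤ) + 1) g) f =
        bkQ q ((k : ℤ) + 1) ((List.range k).foldl (fun g (j : ℕ) => bkQ q ((j : ℤ) + 1) g) f) := by
      rw [List.range_succ, List.foldl_append]
      rfl
    rw [hfold]
    set g := (List.range k).foldl (fun g (j : ℕ) => bkQ q ((j : ℤ) + 1) g) f with hg
    have hi2 : ((k : ℤ) + 1) + 1 ≤ (q : ℤ) := by omega
    refine ⟨bkQ_incQ ih1, ?_, ?_, ?_⟩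
    · intro j hj1 hj2
      push_cast at hj2
      rcases eq_or_lt_of_le hj2 with he | hlt
      · rw [he]
        rw [bkQ_content_lo ih1 (by omega) hi2]
        exact ih4 ((k : ℤ) + 1 + 1) (by omega)
      · rw [bkQ_content_other j (by omega) (by omega)]
        exact ih2 j hj1 (by omega)
    · have : ((k + 1 : ℕ) : ℤ) + 1 = ((k : ℤ) + 1) + 1 := by push_cast; ring
      rw [this, bkQ_content_hi ih1 (by omega) hi2]
      exact ih3
    · intro j hj
      push_cast at hj
      rw [bkQ_content_other j (by omega) (by omega)]
      exact ih4 j (by omega)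


end Aux

/-- Promotion cyclically shifts the binary content of an increasing labeling:
for `1 ≤ i ≤ q−1`, the label `i` occurs in `Pro(f)` iff `i+1` occurs in `f`,
and `q` occurs in `Pro(f)` iff `1` occurs in `f`. -/
theorem stmt11 {P : Type*} [Fintype P] [PartialOrder P] [DecidableEq P]
    (q : ℕ) (hq : 0 < q) (f : P → ℤ) (hf : IncQ q f) :
    (∀ i : ℤ, 1 ≤ i → i ≤ (q : ℤ) - 1 →
      ((∃ p, proQ q f p = i) ↔ ∃ p, f p = i + 1)) ∧
    ((∃ p, proQ q f p = (q : ℤ)) ↔ ∃ p, f p = 1) := by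
  have hpro : proQ q f =
      (List.range (q - 1)).foldl (fun g (j : ℕ) => bkQ q ((j : ℤ) + 1) g) f := by
    first
      | rfl
      | (unfold proQ; exact foldl_bind_eq (List.range (q - 1)) f)
  rw [hpro]
  obtain ⟨_, h2, h3, _⟩ := pro_invariant hf (q - 1) (by omega)
  have hcast : ((q - 1 : ℕ) : ℤ) = (q : ℤ) - 1 := by
    have : (1 : ℕ) ≤ q := hq
    push_cast [this]
    ring
  constructor
  · intro i hi1 hi2
    exact h2 i hi1 (by rw [hcast]; exact hi2)
  · rw [hcast] at h3
    have : (q : ℤ) - 1 + 1 = (q : ℤ) := by ring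
    rw [this] at h3
    exact h3
end

section
/- Let Q be a finite poset with n elements and L a linear extension of Q. Then rowmotion equals the composition of all toggles in the reverse order of L: Row = t_{L⁻¹(1)} ∘ t_{L⁻¹(2)} ∘ ⋯ ∘ t_{L⁻¹(n)} as maps J(Q) → J(Q) (so the toggle of the element with the largest label is applied first). -/
/-- An order ideal (downward-closed subset) of a poset. -/
def IsIdeal {Q : Type*} [PartialOrder Q] (I : Set Q) : Prop :=
  ∀ ⦃a b : Q⦄, a ≤ b → b ∈ I → a ∈ I

/-- `J(Q)`: the order ideals of `Q`. -/
def Ideals (Q : Type*) [PartialOrder Q] : Type _ := {I : Set Q // IsIdeal I}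

open Classical in
/-- The toggle `t_x`: replace `I` by the symmetric difference `I ∆ {x}` if
that set is an order ideal, and do nothing otherwise. -/
noncomputable def toggle {Q : Type*} [PartialOrder Q] (x : Q) (I : Ideals Q) :
    Ideals Q :=
  if h : IsIdeal (symmDiff I.1 {x}) then ⟨symmDiff I.1 {x}, h⟩ else I

/-- Rowmotion: send the order ideal `I` to the order ideal generated by the
minimal elements of the complement of `I`. -/
def rowmotion {Q : Type*} [PartialOrder Q] (I : Ideals Q) : Ideals Q :=
  ⟨{y : Q | ∃ m : Q, (m ∉ I.1 ∧ ∀ z : Q, z ∉ I.1 → z ≤ m → z = m) ∧ y ≤ m},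
    fun _ _ hab hb => hb.imp fun _ h => ⟨h.1, hab.trans h.2⟩⟩

/-!
Rowmotion and the toggle `t_x` decide membership of `x` by the same local rule. In `t_x J`,
an `x ∈ J` stays iff some `y > x` lies in `J`, and an `x ∉ J` enters iff every `z < x` lies in
`J`; in `Row I`, an `x ∈ I` stays iff some `y > x` lies in `Row I`, and an `x ∉ I` enters iff
every `z < x` lies in `I`. Toggling along a linear extension from the top down, every
element is toggled after all elements above it (already carrying their `Row I` status) and
before all elements below it (still carrying their `I` status). Hence at every stage the ideal
equals `Row I` on the upper set of elements toggled so far and `I` elsewhere.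
-/

theorem Set.symmDiff_singleton_of_mem {α : Type*} {s : Set α} {x : α} (hx : x ∈ s) :
    symmDiff s {x} = s \ {x} := by
  ext z; by_cases z = x <;> simp_all [Set.mem_symmDiff]

theorem Set.symmDiff_singleton_of_notMem {α : Type*} {s : Set α} {x : α} (hx : x ∉ s) :
    symmDiff s {x} = insert x s := by
  ext z; by_cases z = x <;> simp_all [Set.mem_symmDiff]

section ToggleRowmotion

variable {Q : Type*} [PartialOrder Q]

open Classical in
theorem toggle_val (x : Q) (J : Ideals Q) :
    (toggle x J).1 = if IsIdeal (symmDiff J.1 {x}) then symmDiff J.1 {x} else J.1 := by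
  by_cases h : IsIdeal (symmDiff J.1 {x}) <;> simp [toggle, h]

theorem toggle_mem_of_ne (J : Ideals Q) {x z : Q} (hzx : z ≠ x) :
    z ∈ (toggle x J).1 ↔ z ∈ J.1 := by
  rw [toggle_val]
  split_ifs
  · simp [Set.mem_symmDiff, hzx]
  · rfl

theorem isIdeal_sdiff_singleton_iff {J : Set Q} (hJ : IsIdeal J) {x : Q} :
    IsIdeal (J \ {x}) ↔ ∀ y, x < y → y ∉ J := by
  constructor
  · intro h y hxy hy
    exact (h hxy.le ⟨hy, hxy.ne'⟩).2 rfl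
  · intro h a b hab ⟨hb, hbx⟩
    refine ⟨hJ hab hb, fun hax => h b ?_ hb⟩
    rw [Set.mem_singleton_iff] at hax hbx
    exact hax ▸ hab.lt_of_ne (Ne.symm (hax ▸ hbx))

theorem isIdeal_insert_iff {J : Set Q} (hJ : IsIdeal J) {x : Q} :
    IsIdeal (insert x J) ↔ ∀ z, z < x → z ∈ J := by
  constructor
  · intro h z hzx
    exact (h hzx.le (Set.mem_insert x J)).resolve_left hzx.ne
  · rintro h a b hab (rfl | hb)
    · exact hab.eq_or_lt.imp id (h a)
    · exact Or.inr (hJ hab hb)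

theorem mem_toggle_self_of_mem {J : Ideals Q} {x : Q} (hx : x ∈ J.1) :
    x ∈ (toggle x J).1 ↔ ∃ y, x < y ∧ y ∈ J.1 := by
  rw [toggle_val, Set.symmDiff_singleton_of_mem hx, isIdeal_sdiff_singleton_iff J.2]
  split_ifs with h
  · simpa using h
  · push Not at h
    simpa [hx] using h

theorem mem_toggle_self_of_notMem {J : Ideals Q} {x : Q} (hx : x ∉ J.1) :
    x ∈ (toggle x J).1 ↔ ∀ z, z < x → z ∈ J.1 := by
  rw [toggle_val, Set.symmDiff_singleton_of_notMem hx, isIdeal_insert_iff J.2]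
  split_ifs with h
  · simpa using h
  · simpa [hx] using h

theorem mem_rowmotion_of_mem {I : Ideals Q} {x : Q} (hx : x ∈ I.1) :
    x ∈ (rowmotion I).1 ↔ ∃ y, x < y ∧ y ∈ (rowmotion I).1 := by
  constructor
  · rintro ⟨m, hm, hxm⟩
    exact ⟨m, hxm.lt_of_ne (by rintro rfl; exact hm.1 hx), m, hm, le_rfl⟩
  · rintro ⟨y, hxy, m, hm, hym⟩
    exact ⟨m, hm, hxy.le.trans hym⟩

theorem mem_rowmotion_of_notMem {I : Ideals Q} {x : Q} (hx : x ∉ I.1) :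
    x ∈ (rowmotion I).1 ↔ ∀ z, z < x → z ∈ I.1 := by
  constructor
  · rintro ⟨m, ⟨hm, hmin⟩, hxm⟩ z hzx
    obtain rfl := hmin x hx hxm
    by_contra hz
    exact hzx.ne (hmin z hz hzx.le)
  · intro h
    refine ⟨x, ⟨hx, fun z hz hzx => ?_⟩, le_rfl⟩
    by_contra hne
    exact hz (h z (hzx.lt_of_ne hne))

theorem toggle_val_eq_ite_insert {I J : Ideals Q} {U : Set Q} {x : Q}
    (hJ : J.1 = U.ite (rowmotion I).1 I.1) (hU : IsUpperSet U)
    (hxU : IsUpperSet (insert x U)) (hx : x ∉ U) :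
    (toggle x J).1 = (insert x U).ite (rowmotion I).1 I.1 := by
  ext z
  rcases eq_or_ne z x with rfl | hzx
  · have above : ∀ y, z < y → (y ∈ J.1 ↔ y ∈ (rowmotion I).1) := fun y hy => by
      have hyU : y ∈ U := (hxU hy.le (Set.mem_insert z U)).resolve_left hy.ne'
      simp [hJ, Set.ite, hyU]
    have below : ∀ y, y < z → (y ∈ J.1 ↔ y ∈ I.1) := fun y hy => by
      have hyU : y ∉ U := fun hyU => hx (hU hy.le hyU)
      simp [hJ, Set.ite, hyU]
    have hzJ : z ∈ J.1 ↔ z ∈ I.1 := by simp [hJ, Set.ite, hx]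
    simp only [Set.ite, Set.mem_union, Set.mem_inter_iff, Set.mem_insert_iff, true_or,
      and_true, Set.mem_sdiff, not_true_eq_false, and_false, or_false]
    by_cases hzI : z ∈ I.1
    · rw [mem_toggle_self_of_mem (hzJ.2 hzI), mem_rowmotion_of_mem hzI]
      exact exists_congr fun y => and_congr_right fun hy => above y hy
    · rw [mem_toggle_self_of_notMem (mt hzJ.1 hzI), mem_rowmotion_of_notMem hzI]
      exact forall₂_congr fun y hy => below y hy
  · simp [toggle_mem_of_ne J hzx, hJ, Set.ite, hzx]

theorem foldr_map_toggle_val (I : Ideals Q) (l : List Q) (hl : l.Pairwise fun a b => ¬b ≤ a)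
    (hU : IsUpperSet {x | x ∈ l}) :
    ((l.map toggle).foldr (· ∘ ·) id I).1 = {x | x ∈ l}.ite (rowmotion I).1 I.1 := by
  induction l with
  | nil => simp
  | cons x l ih =>
    rw [List.pairwise_cons] at hl
    have htail : IsUpperSet {y | y ∈ l} := fun a b hab ha => by
      refine (List.mem_cons.1 (hU hab (List.mem_cons_of_mem x ha))).resolve_left ?_
      rintro rfl
      exact hl.1 a ha hab
    have hxl : x ∉ l := fun hx => hl.1 x hx le_rfl
    have hcons : {y | y ∈ x :: l} = insert x {y | y ∈ l} := by ext; simp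
    rw [hcons] at hU ⊢
    exact toggle_val_eq_ite_insert (ih hl.2 htail) htail hU hxl

end ToggleRowmotion

theorem stmt14_general {Q : Type*} [PartialOrder Q] (n : ℕ)
    (L : Q ≃ Fin n) (hL : ∀ x y : Q, x < y → L x < L y) :
    rowmotion =
      (List.ofFn fun i : Fin n => toggle (L.symm i)).foldr (fun t g => t ∘ g) id := by
  funext I
  have hl : (List.ofFn L.symm).Pairwise fun a b => ¬b ≤ a := by
    rw [List.pairwise_ofFn]
    intro i j hij hji
    rcases hji.lt_or_eq with hlt | heq
    · exact hij.not_gt (by simpa using hL _ _ hlt)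
    · exact hij.ne (L.symm.injective heq).symm
  have huniv : {x | x ∈ List.ofFn L.symm} = Set.univ := by
    ext x
    simpa [List.mem_ofFn] using ⟨L x, L.symm_apply_apply x⟩
  have hmap : (List.ofFn fun i => toggle (L.symm i)) = (List.ofFn L.symm).map toggle :=
    (List.map_ofFn (f := L.symm) (g := toggle)).symm
  apply Subtype.ext
  rw [hmap, foldr_map_toggle_val I _ hl (huniv ▸ isUpperSet_univ), huniv, Set.ite_univ]

/-- Rowmotion equals the composition of all the toggles in the reverse order
of a linear extension `L` (the toggle at the element with the largest label
being applied first). -/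
theorem stmt14 {Q : Type*} [Fintype Q] [PartialOrder Q] (n : ℕ)
    (L : Q ≃ Fin n) (hL : ∀ x y : Q, x < y → L x < L y) :
    rowmotion =
      (List.ofFn fun i : Fin n => toggle (L.symm i)).foldr (fun t g => t ∘ g) id :=
  stmt14_general n L hL
end

section
/- Let P, P₁, P₂ be finite ranked posets with rank functions rk, rk₁, rk₂, and let ι be a Cartesian embedding of P into (P₁,P₂). Then the map H : P → ℤ defined by H(p) = rk₁(ι(p)₁) − rk₂(ι(p)₂) is a column toggle order on P. -/
lemma rank_mono_aux {Q : Type*} [Fintype Q] [PartialOrder Q]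
    (rk : Q → ℤ) (h : ∀ x y : Q, x ⋖ y → rk y = rk x + 1)
    {a b : Q} (hab : a ≤ b) : rk a ≤ rk b := by
  classical
  letI : LocallyFiniteOrder Q := Fintype.toLocallyFiniteOrder
  have := (le_iff_reflTransGen_covBy).mp hab
  induction this with
  | refl => exact le_refl _
  | tail hr hcov ih =>
    have h2 := h _ _ hcov
    have h3 := ih (le_iff_reflTransGen_covBy.mpr hr)
    omega

/-- Given finite ranked posets `P`, `P₁`, `P₂` with rank functions `rk`,
`rk₁`, `rk₂`, and a Cartesian embedding `ι` of `P` into `(P₁, P₂)` (an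
injective order-preserving map into the componentwise-ordered product with
`rk p = rk₁ (ι p).1 + rk₂ (ι p).2`), the map
`H p = rk₁ (ι p).1 − rk₂ (ι p).2` is a column toggle order on `P`. -/
theorem stmt16 {P P₁ P₂ : Type*} [Fintype P] [PartialOrder P]
    [Fintype P₁] [PartialOrder P₁] [Fintype P₂] [PartialOrder P₂]
    (rk : P → ℤ) (rk₁ : P₁ → ℤ) (rk₂ : P₂ → ℤ)
    (hrk : ∀ x y : P, x ⋖ y → rk y = rk x + 1)
    (hrk₁ : ∀ x y : P₁, x ⋖ y → rk₁ y = rk₁ x + 1)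
    (hrk₂ : ∀ x y : P₂, x ⋖ y → rk₂ y = rk₂ x + 1)
    (ι : P → P₁ × P₂) (hinj : Function.Injective ι)
    (hmono : ∀ x y : P, x ≤ y → ι x ≤ ι y)
    (hrank : ∀ p : P, rk p = rk₁ (ι p).1 + rk₂ (ι p).2) :
    ∀ x y : P, x ⋖ y →
      rk₁ (ι y).1 - rk₂ (ι y).2 = (rk₁ (ι x).1 - rk₂ (ι x).2) + 1 ∨
      rk₁ (ι y).1 - rk₂ (ι y).2 = (rk₁ (ι x).1 - rk₂ (ι x).2) - 1 := by
  intro x y hxy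
  have hle := hmono x y hxy.le
  have h1 := rank_mono_aux rk₁ hrk₁ hle.1
  have h2 := rank_mono_aux rk₂ hrk₂ hle.2
  have hsum := hrk x y hxy
  have hx := hrank x
  have hy := hrank y
  omega
end

section
/- Let P, P₁, P₂ be finite ranked posets with rank functions rk, rk₁, rk₂, let ι be a Cartesian embedding of P into (P₁,P₂), and let H : P → ℤ be defined by H(p) = rk₁(ι(p)₁) − rk₂(ι(p)₂). Then toggle-promotion TogPro_H is conjugate to rowmotion Row in the toggle group of P: there exists an element w of the toggle group of P with TogPro_H = w ∘ Row ∘ w⁻¹ as permutations of J(P). -/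
/-- Each toggle is an involution. -/
theorem toggle_toggle {Q : Type*} [PartialOrder Q] (x : Q) (I : Ideals Q) :
    toggle x (toggle x I) = I := by
  classical
  by_cases h : IsIdeal (symmDiff I.1 {x})
  · have h1 : toggle x I = ⟨symmDiff I.1 {x}, h⟩ := dif_pos h
    rw [h1]
    have hc : symmDiff (symmDiff I.1 {x}) {x} = I.1 := symmDiff_symmDiff_cancel_right {x} I.1
    have h2 : IsIdeal (symmDiff (symmDiff I.1 {x}) {x}) := by rw [hc]; exact I.2
    have h3 : toggle x (⟨symmDiff I.1 {x}, h⟩ : Ideals Q) =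
        ⟨symmDiff (symmDiff I.1 {x}) {x}, h2⟩ := dif_pos h2
    rw [h3]
    exact Subtype.ext hc
  · have h1 : toggle x I = I := dif_neg h
    rw [h1, h1]

/-- The toggle `t_x` as a permutation of `J(Q)`. -/
noncomputable def togglePerm {Q : Type*} [PartialOrder Q] (x : Q) :
    Equiv.Perm (Ideals Q) :=
  ⟨toggle x, toggle x, toggle_toggle x, toggle_toggle x⟩

/-- The toggle group of `Q`: the subgroup of permutations of `J(Q)` generated
by the toggles. -/
noncomputable def toggleGroup (Q : Type*) [PartialOrder Q] :
    Subgroup (Equiv.Perm (Ideals Q)) :=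
  Subgroup.closure (Set.range (togglePerm (Q := Q)))

/-!
Call `f : Q → ℤ` a step labelling if it changes by exactly one along every cover relation, and
let `promotion f` toggle the elements of `Q` in increasing order of `f`; elements with equal
labels are never adjacent, so their toggles commute and the order inside a level is irrelevant.
Both `H = rk₁ - rk₂` (by the Cartesian embedding) and `-rk` are step labellings, and they differ
by the even function `2 rk₁`. The promotion of `-rk` toggles from the top rank down, which is
rowmotion. If `f ≤ g` are step labellings with `g - f` even and `f ≠ g`, an element `v`
minimising `f` among those with `f v < g v` is a local minimum of `f`, and raising `f v` by two
conjugates the promotion by `t_v`. Iterating (after shifting `g` so that `f ≤ g`) conjugates the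
promotion of `H` into rowmotion inside the toggle group.
-/

section Toggle

variable {Q : Type*} [PartialOrder Q]

theorem isIdeal_symmDiff_singleton_iff {I : Set Q} (hI : IsIdeal I) (x : Q) :
    IsIdeal (symmDiff I {x}) ↔ (x ∈ I → ¬∃ z ∈ I, x < z) ∧ (x ∉ I → ∀ z < x, z ∈ I) := by
  simp only [IsIdeal, Set.mem_symmDiff, Set.mem_singleton_iff]
  constructor
  · intro h
    refine ⟨fun hx ⟨z, hz, hxz⟩ => ?_, fun hx z hzx => ?_⟩
    · have := h hxz.le (Or.inl ⟨hz, hxz.ne'⟩)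
      tauto
    · rcases h hzx.le (Or.inr ⟨rfl, hx⟩) with ⟨hz, -⟩ | ⟨rfl, -⟩
      · exact hz
      · exact absurd hzx (lt_irrefl z)
  · rintro ⟨habove, hbelow⟩ a b hab (⟨hb, hbx⟩ | ⟨rfl, hb⟩)
    · refine Or.inl ⟨hI hab hb, ?_⟩
      rintro rfl
      exact habove (hI hab hb) ⟨b, hb, lt_of_le_of_ne hab (Ne.symm hbx)⟩
    · rcases hab.eq_or_lt with rfl | hlt
      · exact Or.inr ⟨rfl, hb⟩
      · exact Or.inl ⟨hbelow hb a hlt, hlt.ne⟩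

open Classical in
theorem coe_toggle (x : Q) (I : Ideals Q) :
    (toggle x I).1 = if IsIdeal (symmDiff I.1 {x}) then symmDiff I.1 {x} else I.1 := by
  by_cases h : IsIdeal (symmDiff I.1 {x})
  · rw [if_pos h]
    exact congrArg Subtype.val (dif_pos h : toggle x I = ⟨_, h⟩)
  · rw [if_neg h]
    exact congrArg Subtype.val (dif_neg h : toggle x I = I)

theorem mem_toggle_of_ne {x w : Q} (hw : w ≠ x) (I : Ideals Q) :
    w ∈ (toggle x I).1 ↔ w ∈ I.1 := by
  rw [coe_toggle]
  split_ifs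
  · simp [Set.mem_symmDiff, hw]
  · rfl

theorem mem_toggle_self_iff (x : Q) (I : Ideals Q) :
    x ∈ (toggle x I).1 ↔ (∀ z < x, z ∈ I.1) ∧ (x ∈ I.1 → ∃ z ∈ I.1, x < z) := by
  have hideal := isIdeal_symmDiff_singleton_iff I.2 x
  have hbelow (hx : x ∈ I.1) : ∀ z < x, z ∈ I.1 := fun z hzx => I.2 hzx.le hx
  rw [coe_toggle]
  by_cases hx : x ∈ I.1 <;> split_ifs with h <;> simp_all [Set.mem_symmDiff]

/-- An element `y` comparable with `x` but not adjacent to it is screened off by an element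
strictly between them. -/
theorem mem_toggle_self_of_agree {x y : Q} (hxy : x ≠ y) (hcov : ¬x ⋖ y) (hcov' : ¬y ⋖ x)
    {J K : Ideals Q} (hJK : ∀ w ≠ y, w ∈ J.1 ↔ w ∈ K.1) (hx : x ∈ (toggle x J).1) :
    x ∈ (toggle x K).1 := by
  rw [mem_toggle_self_iff] at hx ⊢
  obtain ⟨hbelow, habove⟩ := hx
  refine ⟨fun z hzx => ?_, fun hxK => ?_⟩
  · rcases eq_or_ne z y with rfl | hzy
    · obtain ⟨c, hzc, hcx⟩ := (not_covBy_iff hzx).1 hcov'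
      exact K.2 hzc.le ((hJK c hzc.ne').1 (hbelow c hcx))
    · exact (hJK z hzy).1 (hbelow z hzx)
  · obtain ⟨z, hzJ, hxz⟩ := habove ((hJK x hxy).2 hxK)
    rcases eq_or_ne z y with rfl | hzy
    · obtain ⟨c, hxc, hcz⟩ := (not_covBy_iff hxz).1 hcov
      exact ⟨c, (hJK c hcz.ne).1 (J.2 hcz.le hzJ), hxc⟩
    · exact ⟨z, (hJK z hzy).1 hzJ, hxz⟩

theorem toggle_comm {x y : Q} (hcov : ¬x ⋖ y) (hcov' : ¬y ⋖ x) (I : Ideals Q) :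
    toggle x (toggle y I) = toggle y (toggle x I) := by
  rcases eq_or_ne x y with rfl | hxy
  · rfl
  have agree {y : Q} (I : Ideals Q) : ∀ w ≠ y, w ∈ (toggle y I).1 ↔ w ∈ I.1 :=
    fun w hw => mem_toggle_of_ne hw I
  apply Subtype.ext
  ext w
  rcases eq_or_ne w x with rfl | hwx
  · rw [mem_toggle_of_ne hxy]
    exact ⟨mem_toggle_self_of_agree hxy hcov hcov' (agree I),
      mem_toggle_self_of_agree hxy hcov hcov' fun w hw => (agree I w hw).symm⟩
  rcases eq_or_ne w y with rfl | hwy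
  · rw [mem_toggle_of_ne hxy.symm]
    exact ⟨mem_toggle_self_of_agree hxy.symm hcov' hcov fun w hw => (agree I w hw).symm,
      mem_toggle_self_of_agree hxy.symm hcov' hcov (agree I)⟩
  · simp only [mem_toggle_of_ne hwx, mem_toggle_of_ne hwy]

theorem togglePerm_commute {x y : Q} (hcov : ¬x ⋖ y) (hcov' : ¬y ⋖ x) :
    Commute (togglePerm x) (togglePerm y) :=
  Equiv.ext (toggle_comm hcov hcov')

end Toggle

section Rowmotion

variable {Q : Type*} [PartialOrder Q]

theorem togglePerm_apply (x : Q) (I : Ideals Q) : togglePerm x I = toggle x I := rfl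

/-- The product of the toggles along `l`; the last toggle of the list acts first. -/
noncomputable def word (l : List Q) : Equiv.Perm (Ideals Q) :=
  (l.map togglePerm).prod

theorem word_cons (x : Q) (l : List Q) : word (x :: l) = togglePerm x * word l := by
  simp [word]

theorem word_mem_toggleGroup (l : List Q) : word l ∈ toggleGroup Q :=
  (toggleGroup Q).list_prod_mem fun _ hg => by
    obtain ⟨x, -, rfl⟩ := List.mem_map.1 hg
    exact Subgroup.subset_closure (Set.mem_range_self x)

/-- What toggling the elements of the up-set `S` from the top down does to `I`. -/
def rowmotionOn (S : Set Q) (I : Ideals Q) : Set Q :=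
  (I.1 \ S) ∪ ((rowmotion I).1 ∩ S)

theorem mem_rowmotionOn_of_notMem {S : Set Q} {w : Q} (hw : w ∉ S) (I : Ideals Q) :
    w ∈ rowmotionOn S I ↔ w ∈ I.1 := by
  simp [rowmotionOn, hw]

theorem mem_rowmotionOn_of_mem {S : Set Q} {w : Q} (hw : w ∈ S) (I : Ideals Q) :
    w ∈ rowmotionOn S I ↔ w ∈ (rowmotion I).1 := by
  simp [rowmotionOn, hw]

theorem coe_toggle_of_rowmotionOn {S : Set Q} (hS : IsUpperSet S) {x : Q} (hx : x ∉ S)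
    (hmax : ∀ z, x < z → z ∈ S) {I J : Ideals Q} (hJ : J.1 = rowmotionOn S I) :
    (toggle x J).1 = rowmotionOn (insert x S) I := by
  ext w
  rcases eq_or_ne w x with rfl | hwx
  · rw [mem_rowmotionOn_of_mem (Set.mem_insert w S), mem_toggle_self_iff, hJ,
      mem_rowmotionOn_of_notMem hx]
    have below (z : Q) (hz : z < w) : z ∈ rowmotionOn S I ↔ z ∈ I.1 :=
      mem_rowmotionOn_of_notMem (fun hzS => hx (hS hz.le hzS)) I
    have above (z : Q) (hz : w < z) : z ∈ rowmotionOn S I ↔ z ∈ (rowmotion I).1 :=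
      mem_rowmotionOn_of_mem (hmax z hz) I
    constructor
    · rintro ⟨hbelow, habove⟩
      by_cases hwI : w ∈ I.1
      · obtain ⟨z, hz, hwz⟩ := habove hwI
        exact (rowmotion I).2 hwz.le ((above z hwz).1 hz)
      · refine ⟨w, ⟨hwI, fun z hzI hzw => ?_⟩, le_rfl⟩
        exact hzw.eq_or_lt.resolve_right fun hlt => hzI ((below z hlt).1 (hbelow z hlt))
    · rintro ⟨m, ⟨hmI, hmin⟩, hwm⟩
      refine ⟨fun z hzw => (below z hzw).2 ?_, fun hwI => ?_⟩
      · by_contra hzI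
        have hzm := hmin z hzI (hzw.le.trans hwm)
        subst hzm
        exact lt_irrefl z (hzw.trans_le hwm)
      · have hwm' : w < m := hwm.lt_of_ne fun h => hmI (h ▸ hwI)
        exact ⟨m, (above m hwm').2 ⟨m, ⟨hmI, hmin⟩, le_rfl⟩, hwm'⟩
  · rw [mem_toggle_of_ne hwx, hJ]
    simp [rowmotionOn, hwx]

theorem coe_word_of_rowmotionOn (l : List Q) (hnd : l.Nodup)
    (htop : l.Pairwise fun u v => ¬v < u) {S : Set Q} (hS : IsUpperSet S)
    (hSl : IsUpperSet (S ∪ {x | x ∈ l})) (hdisj : ∀ x ∈ l, x ∉ S) {I J : Ideals Q}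
    (hJ : J.1 = rowmotionOn S I) : (word l J).1 = rowmotionOn (S ∪ {x | x ∈ l}) I := by
  induction l with
  | nil => simpa [word] using hJ
  | cons x l ih =>
    obtain ⟨hxl, hnd⟩ := List.nodup_cons.1 hnd
    obtain ⟨hxtop, htop⟩ := List.pairwise_cons.1 htop
    have hxS : x ∉ S := hdisj x List.mem_cons_self
    have hSl' : IsUpperSet (S ∪ {y | y ∈ l}) := by
      intro a b hab ha
      rcases hSl hab (by simp only [Set.mem_union, Set.mem_ofPred_eq, List.mem_cons] at ha ⊢; tauto)
        with hb | hb
      · exact Or.inl hb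
      rcases List.mem_cons.1 hb with rfl | hb
      · rcases ha with ha | ha
        · exact absurd (hS hab ha) hxS
        · exact absurd (hab.lt_of_ne fun h => hxl (h ▸ ha)) (hxtop a ha)
      · exact Or.inr hb
    have hmax (z : Q) (hz : x < z) : z ∈ S ∪ {y | y ∈ l} := by
      rcases hSl hz.le (Or.inr List.mem_cons_self) with hzS | hzl
      · exact Or.inl hzS
      · exact Or.inr ((List.mem_cons.1 hzl).resolve_left hz.ne')
    rw [word_cons, Equiv.Perm.mul_apply, togglePerm_apply,
      coe_toggle_of_rowmotionOn hSl' (by simp [hxS, hxl]) hmax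
        (ih hnd htop hSl' fun y hy => hdisj y (List.mem_cons_of_mem x hy))]
    congr 1
    ext y
    simp only [Set.mem_insert_iff, Set.mem_union, Set.mem_ofPred_eq, List.mem_cons]
    tauto

theorem word_eq_rowmotion (l : List Q) (hnd : l.Nodup) (hall : ∀ x, x ∈ l)
    (htop : l.Pairwise fun u v => ¬v < u) : ⇑(word l) = rowmotion := by
  funext I
  apply Subtype.ext
  rw [coe_word_of_rowmotionOn l hnd htop isUpperSet_empty (by simp [hall, isUpperSet_univ])
    (fun _ _ => Set.notMem_empty _) (I := I) (J := I) (by simp [rowmotionOn])]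
  simp [rowmotionOn, hall]

end Rowmotion

theorem List.Perm.prod_map_eq_of_sorted {α β γ M : Type*} [LinearOrder β] [LinearOrder γ]
    [Monoid M] {τ : α → M} {κ₁ : α → β} {κ₂ : α → γ}
    (hκ : ∀ u w, ¬Commute (τ u) (τ w) →
      κ₁ u < κ₁ w ∧ κ₂ u < κ₂ w ∨ κ₁ w < κ₁ u ∧ κ₂ w < κ₂ u)
    {l₁ l₂ : List α} (hp : l₁.Perm l₂) (h₁ : l₁.Pairwise fun u w => κ₁ w ≤ κ₁ u)
    (h₂ : l₂.Pairwise fun u w => κ₂ w ≤ κ₂ u) : (l₁.map τ).prod = (l₂.map τ).prod := by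
  induction l₁ generalizing l₂ with
  | nil => rw [hp.symm.eq_nil]
  | cons x t ih =>
    obtain ⟨A, B, rfl⟩ := List.append_of_mem (hp.subset List.mem_cons_self)
    obtain ⟨hxt, ht⟩ := List.pairwise_cons.1 h₁
    have hcomm : Commute (τ x) (A.map τ).prod := by
      refine Commute.list_prod_right _ _ fun _ hm => ?_
      obtain ⟨a, ha, rfl⟩ := List.mem_map.1 hm
      by_contra hxa
      have hax : κ₂ x ≤ κ₂ a := (List.pairwise_append.1 h₂).2.2 a ha x List.mem_cons_self
      rcases List.mem_cons.1 (hp.symm.subset (List.mem_append_left _ ha)) with rfl | hat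
      · exact hxa (Commute.refl _)
      · rcases hκ x a hxa with h | h
        · exact (hxt a hat).not_gt h.1
        · exact hax.not_gt h.2
    have hAB : (A ++ B).Pairwise fun u w => κ₂ w ≤ κ₂ u :=
      h₂.sublist ((List.sublist_cons_self x B).append_left A)
    rw [List.map_cons, List.prod_cons, ih (hp.trans List.perm_middle).cons_inv ht hAB]
    simp only [List.map_append, List.map_cons, List.prod_append, List.prod_cons, ← mul_assoc,
      hcomm.eq]

section Promotion

variable {Q : Type*} [Fintype Q]

noncomputable def promotionList (f : Q → ℤ) : List Q :=
  Finset.univ.toList.mergeSort fun a b => decide (f b ≤ f a)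

theorem promotionList_perm (f : Q → ℤ) : (promotionList f).Perm Finset.univ.toList :=
  List.mergeSort_perm _ _

theorem promotionList_sorted (f : Q → ℤ) :
    (promotionList f).Pairwise fun u w => f w ≤ f u := by
  have := List.pairwise_mergeSort (le := fun a b => decide (f b ≤ f a))
    (fun a b c hab hbc => by simp only [decide_eq_true_eq] at *; omega)
    (fun a b => by simp only [Bool.or_eq_true, decide_eq_true_eq]; omega) Finset.univ.toList
  simp only [decide_eq_true_eq] at this
  exact this

theorem promotionList_nodup (f : Q → ℤ) : (promotionList f).Nodup :=
  (promotionList_perm f).nodup_iff.2 (Finset.nodup_toList _)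

theorem mem_promotionList (f : Q → ℤ) (x : Q) : x ∈ promotionList f :=
  (promotionList_perm f).mem_iff.2 (Finset.mem_toList.2 (Finset.mem_univ x))

variable [PartialOrder Q]

/-- The toggle-promotion `TogPro_f`: toggle the elements of `Q` in increasing order of `f`. -/
noncomputable def promotion (f : Q → ℤ) : toggleGroup Q :=
  ⟨word (promotionList f), word_mem_toggleGroup _⟩

theorem coe_promotion_eq_word {β : Type*} [LinearOrder β] {f : Q → ℤ} {κ : Q → β}
    (hκ : ∀ u w, u ⋖ w → f u < f w ∧ κ u < κ w ∨ f w < f u ∧ κ w < κ u)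
    {l : List Q} (hl : l.Perm Finset.univ.toList) (hs : l.Pairwise fun u w => κ w ≤ κ u) :
    (promotion f : Equiv.Perm (Ideals Q)) = word l := by
  refine ((promotionList_perm f).trans hl.symm).prod_map_eq_of_sorted (fun u w huw => ?_)
    (promotionList_sorted f) hs
  by_cases hcov : u ⋖ w
  · exact hκ u w hcov
  by_cases hcov' : w ⋖ u
  · exact (hκ w u hcov').symm
  · exact absurd (togglePerm_commute hcov hcov') huw

end Promotion

section Conjugacy

variable {Q : Type*} [PartialOrder Q]

def IsStepLabelling (f : Q → ℤ) : Prop :=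
  ∀ x y : Q, x ⋖ y → f y = f x + 1 ∨ f x = f y + 1

theorem IsStepLabelling.ne {f : Q → ℤ} (hf : IsStepLabelling f) {x y : Q} (hxy : x ⋖ y) :
    f x ≠ f y := by
  rcases hf x y hxy with h | h <;> omega

theorem IsStepLabelling.of_adj {f : Q → ℤ} (hf : IsStepLabelling f) {u v : Q}
    (huv : u ⋖ v ∨ v ⋖ u) : f u = f v + 1 ∨ f v = f u + 1 := by
  rcases huv with h | h <;> rcases hf _ _ h with h' | h' <;> omega

theorem IsStepLabelling.update [DecidableEq Q] {f : Q → ℤ} (hf : IsStepLabelling f) {v : Q}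
    (hv : ∀ u, u ⋖ v ∨ v ⋖ u → f u = f v + 1) :
    IsStepLabelling (Function.update f v (f v + 2)) := by
  intro x y hxy
  by_cases hx : x = v
  · subst hx
    have := hv y (Or.inr hxy)
    simp only [Function.update_self, Function.update_of_ne hxy.ne']
    omega
  by_cases hy : y = v
  · subst hy
    have := hv x (Or.inl hxy)
    simp only [Function.update_self, Function.update_of_ne hxy.ne]
    omega
  · simpa only [Function.update_of_ne hx, Function.update_of_ne hy] using hf x y hxy

variable [Fintype Q]

theorem coe_promotion_eq_word_erase_mul [DecidableEq Q] {f : Q → ℤ} (hf : IsStepLabelling f)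
    {v : Q} (hv : ∀ u, u ⋖ v ∨ v ⋖ u → f u = f v + 1) :
    (promotion f : Equiv.Perm (Ideals Q)) = word ((promotionList f).erase v) * togglePerm v := by
  set R := (promotionList f).erase v
  have hRv : ∀ u ∈ R, u ≠ v := fun u hu h => (promotionList_nodup f).not_mem_erase (h ▸ hu)
  rw [coe_promotion_eq_word (κ := fun x => if x = v then (⊥ : WithBot ℤ) else f x)
    (l := R ++ [v]) ?_ ?_ ?_]
  · simp [word]
  · intro u w huw
    by_cases hu : u = v
    · subst hu
      have := hv w (Or.inr huw)
      simp only [if_pos, if_neg huw.ne', WithBot.bot_lt_coe, and_true]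
      omega
    by_cases hw : w = v
    · subst hw
      have := hv u (Or.inl huw)
      simp only [if_pos, if_neg huw.ne, WithBot.bot_lt_coe, and_true]
      omega
    · simp only [if_neg hu, if_neg hw, WithBot.coe_lt_coe]
      rcases hf u w huw with h | h <;> omega
  · exact (List.perm_append_singleton v R).trans
      ((List.perm_cons_erase (mem_promotionList f v)).symm.trans (promotionList_perm f))
  · refine List.pairwise_append.2 ⟨((promotionList_sorted f).sublist List.erase_sublist).imp_of_mem
      fun hu hw h => ?_, List.pairwise_singleton _ _, fun u hu w hw => ?_⟩
    · simpa [hRv _ hu, hRv _ hw] using h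
    · simp [List.mem_singleton.1 hw]

theorem coe_promotion_update_eq_mul_word_erase [DecidableEq Q] {f : Q → ℤ}
    (hf : IsStepLabelling f) {v : Q} (hv : ∀ u, u ⋖ v ∨ v ⋖ u → f u = f v + 1) :
    (promotion (Function.update f v (f v + 2)) : Equiv.Perm (Ideals Q)) =
      togglePerm v * word ((promotionList f).erase v) := by
  set R := (promotionList f).erase v
  have hRv : ∀ u ∈ R, u ≠ v := fun u hu h => (promotionList_nodup f).not_mem_erase (h ▸ hu)
  rw [coe_promotion_eq_word (κ := fun x => if x = v then (⊤ : WithTop ℤ) else f x)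
    (l := v :: R) ?_ ?_ ?_, word_cons]
  · intro u w huw
    by_cases hu : u = v
    · subst hu
      have := hv w (Or.inr huw)
      simp only [if_pos, if_neg huw.ne', Function.update_self,
        Function.update_of_ne huw.ne', WithTop.coe_lt_top, and_true]
      omega
    by_cases hw : w = v
    · subst hw
      have := hv u (Or.inl huw)
      simp only [if_pos, if_neg huw.ne, Function.update_self,
        Function.update_of_ne huw.ne, WithTop.coe_lt_top, and_true]
      omega
    · simp only [if_neg hu, if_neg hw, Function.update_of_ne hu, Function.update_of_ne hw,
        WithTop.coe_lt_coe]
      rcases hf u w huw with h | h <;> omega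
  · exact (List.perm_cons_erase (mem_promotionList f v)).symm.trans (promotionList_perm f)
  · refine List.pairwise_cons.2 ⟨fun u _ => by simp,
      ((promotionList_sorted f).sublist List.erase_sublist).imp_of_mem fun hu hw h => ?_⟩
    simpa [hRv _ hu, hRv _ hw] using h

/-- At a local minimum `v` of `f` the toggle `t_v` can be applied first; once `f v` is raised by
two it is applied last. -/
theorem isConj_promotion_update [DecidableEq Q] {f : Q → ℤ} (hf : IsStepLabelling f) {v : Q}
    (hv : ∀ u, u ⋖ v ∨ v ⋖ u → f u = f v + 1) :
    IsConj (promotion f) (promotion (Function.update f v (f v + 2))) := by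
  refine isConj_iff.2 ⟨⟨togglePerm v, Subgroup.subset_closure (Set.mem_range_self v)⟩,
    Subtype.ext ?_⟩
  simp only [Subgroup.coe_mul, Subgroup.coe_inv, coe_promotion_eq_word_erase_mul hf hv,
    coe_promotion_update_eq_mul_word_erase hf hv]
  group

/-- Among the elements where `f < g`, one with the least value of `f` is a local minimum of `f`. -/
theorem exists_local_min_of_lt {f g : Q → ℤ} (hf : IsStepLabelling f) (hg : IsStepLabelling g)
    (hle : ∀ x, f x ≤ g x) (hdvd : ∀ x, 2 ∣ g x - f x) (hne : f ≠ g) :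
    ∃ v, f v + 2 ≤ g v ∧ ∀ u, u ⋖ v ∨ v ⋖ u → f u = f v + 1 := by
  classical
  obtain ⟨x, hx⟩ := Function.ne_iff.1 hne
  obtain ⟨v, hvS, hvmin⟩ := Finset.exists_min_image (Finset.univ.filter fun x => f x < g x) f
    ⟨x, Finset.mem_filter.2 ⟨Finset.mem_univ x, (hle x).lt_of_ne hx⟩⟩
  have hv := (Finset.mem_filter.1 hvS).2
  refine ⟨v, by have := hdvd v; omega, fun u hu => ?_⟩
  have hfu := hf.of_adj hu
  have hgu := hg.of_adj hu
  have hmin : f u < g u → f v ≤ f u := fun h => hvmin u (Finset.mem_filter.2 ⟨Finset.mem_univ u, h⟩)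
  have := hle u
  have := hdvd v
  omega

theorem isConj_promotion_of_le {f g : Q → ℤ} (hf : IsStepLabelling f) (hg : IsStepLabelling g)
    (hle : ∀ x, f x ≤ g x) (hdvd : ∀ x, 2 ∣ g x - f x) :
    IsConj (promotion f) (promotion g) := by
  classical
  induction hn : (∑ x, g x - ∑ x, f x).toNat using Nat.strong_induction_on generalizing f with
  | _ n ih =>
  by_cases hfg : f = g
  · subst hfg
    exact IsConj.refl _
  obtain ⟨v, hvg, hv⟩ := exists_local_min_of_lt hf hg hle hdvd hfg
  have hle' : ∀ x, Function.update f v (f v + 2) x ≤ g x := fun x => by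
    by_cases hx : x = v
    · subst hx; simpa using hvg
    · simpa [hx] using hle x
  have hsum : ∑ x, Function.update f v (f v + 2) x = ∑ x, f x + 2 := by
    rw [Finset.sum_update_of_mem (Finset.mem_univ v),
      Finset.sum_eq_add_sum_sdiff_singleton_of_mem (Finset.mem_univ v) f]
    ring
  have hsum_le := Finset.sum_le_sum fun x (_ : x ∈ Finset.univ) => hle' x
  refine (isConj_promotion_update hf hv).trans
    (ih _ (by omega) (hf.update hv) hle' (fun x => ?_) rfl)
  by_cases hx : x = v
  · subst hx
    have := hdvd x
    simp only [Function.update_self]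
    omega
  · simpa [hx] using hdvd x

theorem isConj_promotion {f g : Q → ℤ} (hf : IsStepLabelling f) (hg : IsStepLabelling g)
    (hdvd : ∀ x, 2 ∣ g x - f x) : IsConj (promotion f) (promotion g) := by
  obtain ⟨M, hM⟩ := Finite.exists_le fun x => f x - g x
  have hM₀ := le_abs_self M
  have hM₁ := abs_nonneg M
  have hshift : promotion (fun x => g x + 2 * |M|) = promotion g :=
    Subtype.ext (coe_promotion_eq_word (κ := g)
      (fun u w huw => by rcases hg u w huw with h | h <;> omega)
      (promotionList_perm g) (promotionList_sorted g))
  rw [← hshift]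
  exact isConj_promotion_of_le hf (fun u w huw => by rcases hg u w huw with h | h <;> omega)
    (fun x => by have := hM x; omega) (fun x => by have := hdvd x; omega)

end Conjugacy

section TogglePromotion

variable {Q : Type*} [PartialOrder Q]

theorem coe_word (l : List Q) : ⇑(word l) = l.foldr (fun x g => toggle x ∘ g) id := by
  induction l with
  | nil => rfl
  | cons x l ih => rw [word_cons, Equiv.Perm.coe_mul, ih]; rfl

theorem foldl_comp_eq_word {ι : Type*} (T : ι → List Q) (ds : List ι)
    (h : Ideals Q → Ideals Q) :
    ds.foldl (fun g i => ((T i).foldr (fun x g' => toggle x ∘ g') id) ∘ g) h =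
      ⇑(word (ds.reverse.flatMap T)) ∘ h := by
  induction ds generalizing h with
  | nil => rfl
  | cons i ds ih =>
    rw [List.foldl_cons, ih, ← coe_word, List.reverse_cons, List.flatMap_append]
    simp [word, Function.comp_assoc]

theorem togglePromotion_eq_promotion [Fintype Q] {f : Q → ℤ} (hf : ∀ x y, x ⋖ y → f x ≠ f y)
    {ds : List ℤ} (hds : ds.Pairwise (· < ·)) (hcover : ∀ x, f x ∈ ds) (T : ℤ → List Q)
    (hT : ∀ i, (T i).Nodup ∧ ∀ p, p ∈ T i ↔ f p = i) :
    ds.foldl (fun g i => ((T i).foldr (fun x g' => toggle x ∘ g') id) ∘ g) id =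
      ⇑(promotion f : Equiv.Perm (Ideals Q)) := by
  have hdec : ds.reverse.Pairwise (· > ·) := List.pairwise_reverse.2 hds
  have hlevel {i : ℤ} {p : Q} (hp : p ∈ T i) : f p = i := ((hT i).2 p).1 hp
  have hnd : (ds.reverse.flatMap T).Nodup :=
    List.nodup_flatMap.2 ⟨fun i _ => (hT i).1,
      hdec.imp fun hij p hpi hpj => hij.ne' ((hlevel hpi).symm.trans (hlevel hpj))⟩
  rw [foldl_comp_eq_word, Function.comp_id, coe_promotion_eq_word (κ := f) ?_ ?_ ?_]
  · intro u w huw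
    rcases (hf u w huw).lt_or_gt with h | h
    · exact Or.inl ⟨h, h⟩
    · exact Or.inr ⟨h, h⟩
  · refine (List.perm_ext_iff_of_nodup hnd (Finset.nodup_toList _)).2 fun p => ?_
    simp only [List.mem_flatMap, List.mem_reverse, Finset.mem_toList, Finset.mem_univ, iff_true]
    exact ⟨f p, hcover p, ((hT _).2 p).2 rfl⟩
  · refine List.pairwise_flatMap.2 ⟨fun i _ => (hT i).1.imp_of_mem fun hu hw _ => ?_,
      hdec.imp fun hij u hu w hw => ?_⟩
    · rw [hlevel hu, hlevel hw]
    · rw [hlevel hu, hlevel hw]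
      exact hij.le

end TogglePromotion

theorem pairwise_lt_map_add_range (a : ℤ) (n : ℕ) :
    ((List.range n).map fun j => a + (j : ℤ)).Pairwise (· < ·) := by
  -- the cast `(j : ℤ)` elaborates as a monadic lift of the whole list `List.range n`
  simp only [List.pure_def, List.bind_eq_flatMap, ← List.map_eq_flatMap, List.map_map]
  exact List.pairwise_lt_range.map _ fun _ _ h => by simp [h]

theorem mem_map_add_range {a b i : ℤ} :
    i ∈ (List.range (b + 1 - a).toNat).map (fun j => a + (j : ℤ)) ↔ a ≤ i ∧ i ≤ b := by
  simp only [List.pure_def, List.bind_eq_flatMap, ← List.map_eq_flatMap, List.map_map,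
    List.mem_map, List.mem_range, Function.comp_apply]
  exact ⟨fun ⟨j, hj, hji⟩ => by omega, fun hi => ⟨(i - a).toNat, by omega, by omega⟩⟩

theorem strictMono_of_covBy_add_one {α : Type*} [PartialOrder α] [Finite α] {rk : α → ℤ}
    (h : ∀ x y, x ⋖ y → rk y = rk x + 1) : StrictMono rk := by
  intro x y hxy
  induction y using WellFoundedLT.induction with
  | _ y ih =>
  obtain ⟨c, hxc, hcy⟩ := exists_le_covBy_of_lt hxy
  rw [h c y hcy]
  rcases hxc.eq_or_lt with rfl | hlt
  · omega
  · have := ih c hcy.lt hlt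
    omega

theorem coe_promotion_eq_rowmotion {Q : Type*} [PartialOrder Q] [Fintype Q] {g : Q → ℤ}
    (hg : StrictAnti g) : ⇑(promotion g : Equiv.Perm (Ideals Q)) = rowmotion :=
  word_eq_rowmotion _ (promotionList_nodup g) (mem_promotionList g)
    ((promotionList_sorted g).imp fun h hlt => (hg hlt).not_ge h)

theorem stmt17_general {P P₁ P₂ : Type*} [Fintype P] [PartialOrder P]
    [Fintype P₁] [PartialOrder P₁] [Fintype P₂] [PartialOrder P₂]
    (rk : P → ℤ) (rk₁ : P₁ → ℤ) (rk₂ : P₂ → ℤ)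
    (hrk : ∀ x y : P, x ⋖ y → rk y = rk x + 1)
    (hrk₁ : ∀ x y : P₁, x ⋖ y → rk₁ y = rk₁ x + 1)
    (hrk₂ : ∀ x y : P₂, x ⋖ y → rk₂ y = rk₂ x + 1)
    (ι : P → P₁ × P₂)
    (hmono : ∀ x y : P, x ≤ y → ι x ≤ ι y)
    (hrank : ∀ p : P, rk p = rk₁ (ι p).1 + rk₂ (ι p).2)
    (a b : ℤ) (hab : ∀ p : P, a ≤ rk₁ (ι p).1 - rk₂ (ι p).2 ∧ rk₁ (ι p).1 - rk₂ (ι p).2 ≤ b)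
    (T : ℤ → List P)
    (hT : ∀ i : ℤ, (T i).Nodup ∧ ∀ p : P, p ∈ T i ↔ rk₁ (ι p).1 - rk₂ (ι p).2 = i) :
    ∃ w ∈ toggleGroup P,
      (((List.range (b + 1 - a).toNat).map fun j => a + (j : ℤ)).foldl
          (fun g i => ((T i).foldr (fun x g' => toggle x ∘ g') id) ∘ g) id) =
        ⇑w ∘ rowmotion ∘ ⇑w⁻¹ := by
  have hH : IsStepLabelling fun p => rk₁ (ι p).1 - rk₂ (ι p).2 := fun x y hxy => by
    have h₁ := (strictMono_of_covBy_add_one hrk₁).monotone (hmono x y hxy.le).1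
    have h₂ := (strictMono_of_covBy_add_one hrk₂).monotone (hmono x y hxy.le).2
    have := hrk x y hxy
    have := hrank x
    have := hrank y
    dsimp only
    omega
  have hrow : IsStepLabelling fun p => -rk p := fun x y hxy => by
    have := hrk x y hxy
    dsimp only
    omega
  obtain ⟨w, hw⟩ := isConj_iff.1 <| isConj_promotion hrow hH fun p => by
    have := hrank p
    omega
  refine ⟨w, w.2, ?_⟩
  rw [togglePromotion_eq_promotion (fun _ _ => hH.ne) (pairwise_lt_map_add_range a _)
    (fun p => mem_map_add_range.2 (hab p)) T hT, ← hw,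
    ← coe_promotion_eq_rowmotion (strictMono_of_covBy_add_one hrk).neg]
  rfl

/-- Let `ι` be a Cartesian embedding of the finite ranked poset `P` into
`(P₁, P₂)`, and let `H p = rk₁ (ι p).1 − rk₂ (ι p).2`. Then toggle-promotion
`TogPro_H = T_H^b ∘ ⋯ ∘ T_H^a` (where `[a,b]` contains the image of `H`, and
each `T_H^i` is the composition in any order of the toggles at elements with
`H`-value `i`) is conjugate to rowmotion in the toggle group of `P`. -/
theorem stmt17 {P P₁ P₂ : Type*} [Fintype P] [PartialOrder P]
    [Fintype P₁] [PartialOrder P₁] [Fintype P₂] [PartialOrder P₂]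
    (rk : P → ℤ) (rk₁ : P₁ → ℤ) (rk₂ : P₂ → ℤ)
    (hrk : ∀ x y : P, x ⋖ y → rk y = rk x + 1)
    (hrk₁ : ∀ x y : P₁, x ⋖ y → rk₁ y = rk₁ x + 1)
    (hrk₂ : ∀ x y : P₂, x ⋖ y → rk₂ y = rk₂ x + 1)
    (ι : P → P₁ × P₂) (hinj : Function.Injective ι)
    (hmono : ∀ x y : P, x ≤ y → ι x ≤ ι y)
    (hrank : ∀ p : P, rk p = rk₁ (ι p).1 + rk₂ (ι p).2)
    (a b : ℤ) (hab : ∀ p : P, a ≤ rk₁ (ι p).1 - rk₂ (ι p).2 ∧ rk₁ (ι p).1 - rk₂ (ι p).2 ≤ b)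
    (T : ℤ → List P)
    (hT : ∀ i : ℤ, (T i).Nodup ∧ ∀ p : P, p ∈ T i ↔ rk₁ (ι p).1 - rk₂ (ι p).2 = i) :
    ∃ w ∈ toggleGroup P,
      (((List.range (b + 1 - a).toNat).map fun j => a + (j : ℤ)).foldl
          (fun g i => ((T i).foldr (fun x g' => toggle x ∘ g') id) ∘ g) id) =
        ⇑w ∘ rowmotion ∘ ⇑w⁻¹ :=
  stmt17_general rk rk₁ rk₂ hrk hrk₁ hrk₂ ι hmono hrank a b hab T hT
end

section
/- Let P be a finite poset and R a consistent restriction function on P, and let φ : Inc_R(P) → J(Γ(P,R)) be the bijection φ(f) = {(p,k) ∈ Γ(P,R) : f(p) ≤ k}. For i ∈ ℤ, let T^i : J(Γ(P,R)) → J(Γ(P,R)) be the composition, in any order, of the toggles t_{(p,i)} over all p ∈ P with (p,i) ∈ Γ(P,R) (these toggles pairwise commute). Then φ(ρ_i(f)) = T^i(φ(f)) for every i ∈ ℤ and every f ∈ Inc_R(P); consequently φ(Pro(f)) = TogPro_{H_Γ}(φ(f)) for all f ∈ Inc_R(P), where H_Γ : Γ(P,R) → ℤ is the toggle order taking (p,k)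 to k. -/
/-- The underlying set of `Γ(P,R)`: pairs `(p,k)` with `k ∈ R(p)`,
`k ≠ max R(p)`. -/
def GammaSet {P : Type*} [PartialOrder P] (R : P → Finset ℤ)
    (hR : ∀ p, (R p).Nonempty) : Type _ :=
  {x : P × ℤ // x.2 ∈ R x.1 ∧ x.2 ≠ (R x.1).max' (hR x.1)}

/-- The generating relation of `Γ(P,R)`. -/
def GammaRel {P : Type*} [PartialOrder P] (R : P → Finset ℤ)
    (hR : ∀ p, (R p).Nonempty) : GammaSet R hR → GammaSet R hR → Prop := fun a b =>
  (a.1.1 = b.1.1 ∧ b.1.2 < a.1.2 ∧ ∀ k ∈ R a.1.1, b.1.2 < k → a.1.2 ≤ k) ∨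
  (a.1.1 ⋖ b.1.1 ∧ a.1.2 < b.1.2 ∧ (∀ k ∈ R a.1.1, k < b.1.2 → k ≤ a.1.2) ∧
    ¬ ∃ k ∈ R b.1.1, b.1.2 < k ∧ a.1.2 < k ∧ ∀ k' ∈ R a.1.1, k' < k → k' ≤ a.1.2)

/-- Order ideals of `Γ(P,R)` with respect to the reflexive-transitive closure
of the generating relation. -/
def IsIdealG {P : Type*} [PartialOrder P] (R : P → Finset ℤ)
    (hR : ∀ p, (R p).Nonempty) (I : Set (GammaSet R hR)) : Prop :=
  ∀ ⦃x y : GammaSet R hR⦄, Relation.ReflTransGen (GammaRel R hR) x y → y ∈ I → x ∈ I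

open Classical in
/-- The toggle `t_x` on (sets of) elements of `Γ(P,R)`: replace `I` by the
symmetric difference `I ∆ {x}` if that set is an order ideal, and do nothing
otherwise. -/
noncomputable def toggleG {P : Type*} [PartialOrder P] (R : P → Finset ℤ)
    (hR : ∀ p, (R p).Nonempty) (x : GammaSet R hR) (I : Set (GammaSet R hR)) :
    Set (GammaSet R hR) :=
  if IsIdealG R hR (symmDiff I {x}) then symmDiff I {x} else I

open Classical in
/-- `R(p)_{>i}`: the smallest label of `R(p)` greater than `i`
(defaulting to `i` when there is none). -/
noncomputable def Rgt {P : Type*} [PartialOrder P] (R : P → Finset ℤ)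
    (p : P) (i : ℤ) : ℤ :=
  if h : ((R p).filter fun k => i < k).Nonempty
  then ((R p).filter fun k => i < k).min' h else i

open Classical in
/-- The `i`-th generalized Bender-Knuth involution `ρ_i` on `Inc_R(P)`:
change a label `i` at `p` to `R(p)_{>i}` and a label `R(p)_{>i}` to `i`,
wherever possible. -/
noncomputable def gbk {P : Type*} [PartialOrder P] [DecidableEq P]
    (R : P → Finset ℤ) (i : ℤ) (f : P → ℤ) : P → ℤ := fun p =>
  if f p = i ∧ IncLabel R (Function.update f p (Rgt R p i)) then Rgt R p i
  else if f p = Rgt R p i ∧ IncLabel R (Function.update f p i) then i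
  else f p

lemma Finset.exists_greatest_of_mem {α : Type*} [LinearOrder α] {s : Finset α} {Q : α → Prop}
    [DecidablePred Q] {a : α} (ha : a ∈ s) (hQ : Q a) :
    ∃ m ∈ s, Q m ∧ a ≤ m ∧ ∀ k ∈ s, Q k → k ≤ m := by
  have ha' : a ∈ s.filter Q := Finset.mem_filter.2 ⟨ha, hQ⟩
  obtain ⟨m, hm, hmax⟩ := (s.filter Q).exists_max_image id ⟨a, ha'⟩
  rw [Finset.mem_filter] at hm
  exact ⟨m, hm.1, hm.2, hmax a ha', fun k hk hQk => hmax k (Finset.mem_filter.2 ⟨hk, hQk⟩)⟩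

section Rgt

variable {P : Type*} [PartialOrder P] {R : P → Finset ℤ}

lemma Rgt_spec {p : P} {i k : ℤ} (hk : k ∈ R p) (hik : i < k) :
    Rgt R p i ∈ R p ∧ i < Rgt R p i ∧ Rgt R p i ≤ k := by
  have hk' : k ∈ (R p).filter (i < ·) := Finset.mem_filter.2 ⟨hk, hik⟩
  rw [Rgt, dif_pos ⟨k, hk'⟩]
  exact ⟨(Finset.mem_filter.1 (Finset.min'_mem _ _)).1,
    (Finset.mem_filter.1 (Finset.min'_mem _ _)).2, Finset.min'_le _ _ hk'⟩

lemma le_Rgt (p : P) (i : ℤ) : i ≤ Rgt R p i := by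
  by_cases h : ∃ k ∈ R p, i < k
  · obtain ⟨k, hk, hik⟩ := h
    exact (Rgt_spec hk hik).2.1.le
  · rw [Rgt, dif_neg (fun ⟨k, hk⟩ => h ⟨k, Finset.mem_filter.1 hk⟩)]

lemma Rgt_le_iff {p : P} {i k : ℤ} (hk : k ∈ R p) (hki : k ≠ i) : Rgt R p i ≤ k ↔ i ≤ k := by
  rcases hki.lt_or_gt with hlt | hgt
  · have := le_Rgt (R := R) p i
    constructor <;> intro <;> omega
  · exact iff_of_true (Rgt_spec hk hgt).2.2 hgt.le

/-- Moving a label between `i` and `R(p)_{>i}` changes `{k ∈ R(p) | label ≤ k}` only at `k = i`. -/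
lemma le_iff_of_swap {p : P} {i k u w : ℤ} (hk : k ∈ R p) (hi : i < Rgt R p i)
    (h : (u = i ∧ w = Rgt R p i) ∨ (u = Rgt R p i ∧ w = i)) :
    w ≤ k ↔ (u ≤ k ↔ k ≠ i) := by
  rcases eq_or_ne k i with rfl | hki
  · rcases h with ⟨rfl, rfl⟩ | ⟨rfl, rfl⟩ <;> simp only [ne_eq, not_true_eq_false, iff_false] <;>
      omega
  · have := Rgt_le_iff hk hki
    rcases h with ⟨rfl, rfl⟩ | ⟨rfl, rfl⟩ <;> simp only [ne_eq, hki, not_false_eq_true, iff_true]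
      <;> tauto

end Rgt

section Toggles

variable {P : Type*} [PartialOrder P] {R : P → Finset ℤ} {hR : ∀ p, (R p).Nonempty}

lemma GammaRel.snd_ne {x y : GammaSet R hR} (h : GammaRel R hR x y) : x.1.2 ≠ y.1.2 := by
  rcases h with ⟨-, h, -⟩ | ⟨-, h, -⟩ <;> omega

lemma isIdealG_iff {I : Set (GammaSet R hR)} :
    IsIdealG R hR I ↔ ∀ ⦃x y : GammaSet R hR⦄, GammaRel R hR x y → y ∈ I → x ∈ I := by
  refine ⟨fun h x y hxy => h (.single hxy), fun h x y hxy => ?_⟩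
  induction hxy with
  | refl => exact id
  | tail _ hbc ih => exact fun hy => ih (h hbc hy)

/-- `GammaRel x y` says that `x` is covered by `y`; so `t_y` changes an order ideal `I` iff `y` is
maximal in `I` or all elements covered by `y` lie in `I`. -/
def IsToggleable (I : Set (GammaSet R hR)) (y : GammaSet R hR) : Prop :=
  (y ∈ I → ∀ z ∈ I, ¬ GammaRel R hR y z) ∧ (y ∉ I → ∀ x, GammaRel R hR x y → x ∈ I)

lemma isIdealG_symmDiff_singleton_iff {I : Set (GammaSet R hR)} (hI : IsIdealG R hR I)
    (y : GammaSet R hR) : IsIdealG R hR (symmDiff I {y}) ↔ IsToggleable I y := by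
  rw [isIdealG_iff] at hI ⊢
  have hirrefl : ¬ GammaRel R hR y y := fun h => h.snd_ne rfl
  simp only [Set.mem_symmDiff, Set.mem_singleton_iff]
  constructor
  · intro h
    refine ⟨fun hy z hz hyz => ?_, fun hy x hxy => ?_⟩
    · obtain rfl | hzy := eq_or_ne z y
      · exact hirrefl hyz
      · rcases h hyz (.inl ⟨hz, hzy⟩) with ⟨-, h⟩ | ⟨-, h⟩ <;> tauto
    · rcases h hxy (.inr ⟨rfl, hy⟩) with ⟨h, -⟩ | ⟨rfl, -⟩
      · exact h
      · exact absurd hxy hirrefl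
  · rintro ⟨hmax, hmin⟩ x z hxz (⟨hz, hzy⟩ | ⟨rfl, hz⟩)
    · by_cases hxy : x = y
      · subst hxy
        exact absurd hxz (hmax (hI hxz hz) z hz)
      · exact .inl ⟨hI hxz hz, hxy⟩
    · exact .inl ⟨hmin hz x hxz, fun hxz' => hirrefl (hxz' ▸ hxz)⟩

lemma isToggleable_symmDiff_iff {I S : Set (GammaSet R hR)} {y : GammaSet R hR} (hy : y ∉ S)
    (hS : ∀ z ∈ S, ¬ GammaRel R hR y z ∧ ¬ GammaRel R hR z y) :
    IsToggleable (symmDiff I S) y ↔ IsToggleable I y := by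
  have hmem : ∀ z ∉ S, (z ∈ symmDiff I S ↔ z ∈ I) := fun z hz => by
    simp only [Set.mem_symmDiff]; tauto
  have hfar : ∀ z, GammaRel R hR y z ∨ GammaRel R hR z y → z ∉ S := fun z hz hzS => by
    have := hS z hzS; tauto
  unfold IsToggleable
  simp only [hmem y hy]
  constructor
  · rintro ⟨h₁, h₂⟩
    refine ⟨fun hyI z hz hyz => h₁ hyI z ((hmem z (hfar z (.inl hyz))).2 hz) hyz,
      fun hyI x hxy => (hmem x (hfar x (.inr hxy))).1 (h₂ hyI x hxy)⟩
  · rintro ⟨h₁, h₂⟩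
    refine ⟨fun hyI z hz hyz => h₁ hyI z ((hmem z (hfar z (.inl hyz))).1 hz) hyz,
      fun hyI x hxy => (hmem x (hfar x (.inr hxy))).2 (h₂ hyI x hxy)⟩

lemma isIdealG_toggleG {I : Set (GammaSet R hR)} (hI : IsIdealG R hR I) (x : GammaSet R hR) :
    IsIdealG R hR (toggleG R hR x I) := by
  unfold toggleG
  split_ifs with h
  exacts [h, hI]

lemma isIdealG_foldr_toggleG {I : Set (GammaSet R hR)} (hI : IsIdealG R hR I)
    (L : List (GammaSet R hR)) :
    IsIdealG R hR (L.foldr (fun x g => toggleG R hR x ∘ g) id I) := by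
  induction L with
  | nil => exact hI
  | cons x L ih => exact isIdealG_toggleG ih x

/-- Elements of one level of `Γ` are pairwise non-adjacent, so their toggles do not interact. -/
lemma foldr_toggleG_eq_symmDiff {I : Set (GammaSet R hR)} (hI : IsIdealG R hR I) {i : ℤ}
    (L : List (GammaSet R hR)) (hL : L.Nodup) (hLi : ∀ x ∈ L, x.1.2 = i) :
    L.foldr (fun x g => toggleG R hR x ∘ g) id I =
      symmDiff I {y | y ∈ L ∧ IsToggleable I y} := by
  induction L with
  | nil => ext; simp [Set.mem_symmDiff]
  | cons x L ih =>
    obtain ⟨hxL, hL⟩ := List.nodup_cons.1 hL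
    have hx := hLi x List.mem_cons_self
    have hLi' : ∀ y ∈ L, y.1.2 = i := fun y hy => hLi y (List.mem_cons_of_mem x hy)
    have htog : IsToggleable (symmDiff I {y | y ∈ L ∧ IsToggleable I y}) x ↔
        IsToggleable I x :=
      isToggleable_symmDiff_iff (fun h => hxL h.1) fun z hz =>
        ⟨fun h => h.snd_ne (by rw [hx, hLi' z hz.1]), fun h => h.snd_ne (by rw [hx, hLi' z hz.1])⟩
    rw [List.foldr_cons, Function.comp_apply, ih hL hLi', toggleG,
      isIdealG_symmDiff_singleton_iff (ih hL hLi' ▸ isIdealG_foldr_toggleG hI L), htog]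
    ext z
    by_cases hzx : z = x
    · subst hzx
      split_ifs with h <;> simp [Set.mem_symmDiff, hxL, h]
    · split_ifs <;> simp [Set.mem_symmDiff, hzx]

end Toggles

section Labels

variable {P : Type*} [PartialOrder P] {R : P → Finset ℤ} {hR : ∀ p, (R p).Nonempty}

lemma GammaSet.Rgt_mem (x : GammaSet R hR) : Rgt R x.1.1 x.1.2 ∈ R x.1.1 :=
  (Rgt_spec ((R _).max'_mem (hR _)) ((R _).le_max' _ x.2.1 |>.lt_of_ne x.2.2)).1

lemma GammaSet.lt_Rgt (x : GammaSet R hR) : x.1.2 < Rgt R x.1.1 x.1.2 :=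
  (Rgt_spec ((R _).max'_mem (hR _)) ((R _).le_max' _ x.2.1 |>.lt_of_ne x.2.2)).2.1

variable (R hR) in
/-- The bijection `φ : Inc_R(P) → J(Γ(P,R))`. -/
def idealOfLabel (f : P → ℤ) : Set (GammaSet R hR) := {x | f x.1.1 ≤ x.1.2}

lemma isIdealG_idealOfLabel {f : P → ℤ} (hf : IncLabel R f) :
    IsIdealG R hR (idealOfLabel R hR f) := by
  rw [isIdealG_iff]
  rintro x y (⟨hxy, hlt, -⟩ | ⟨hcov, -, hpred, -⟩) (hy : f y.1.1 ≤ y.1.2)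
  · show f x.1.1 ≤ x.1.2
    rw [hxy]
    omega
  · exact hpred _ (hf.1 _) ((hf.2 hcov.lt).trans_le hy)

/-- If `f p ≥ f q` for a cover `p ⋖ q`, consistency provides an edge `(p, k₁) ⋖ (q, k₂)` of `Γ`
with `f q ≤ k₂` and `k₁ < f p`, so `φ(f)` is not an order ideal. -/
lemma lt_of_covBy_of_isIdealG (hcons : Consistent R hR) {f : P → ℤ} (hf : ∀ p, f p ∈ R p)
    (hI : IsIdealG R hR (idealOfLabel R hR f)) {p q : P} (hpq : p ⋖ q) : f p < f q := by
  by_contra! hle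
  have hmin : (R p).min' (hR p) < f q :=
    (hcons p q hpq).1.trans_le ((R q).min'_le _ (hf q))
  obtain ⟨k₁, hk₁, hk₁q, -, hk₁max⟩ :=
    Finset.exists_greatest_of_mem (Q := (· < f q)) ((R p).min'_mem (hR p)) hmin
  obtain ⟨k₂, hk₂, ⟨hk₁₂, hk₂pred⟩, hqk₂, hk₂max⟩ :=
    Finset.exists_greatest_of_mem (s := R q) (Q := fun z => k₁ < z ∧ ∀ k ∈ R p, k < z → k ≤ k₁)
      (hf q) ⟨hk₁q, hk₁max⟩
  have hk₂p : k₂ ≤ f p := by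
    by_contra! h
    have := hk₂pred (f p) (hf p) h
    omega
  have hpmax := (R p).le_max' _ (hf p)
  have hqmax := (hcons p q hpq).2
  have hk₁ne : k₁ ≠ (R p).max' (hR p) := by omega
  have hk₂ne : k₂ ≠ (R q).max' (hR q) := by omega
  have hrel : GammaRel R hR ⟨(p, k₁), hk₁, hk₁ne⟩ ⟨(q, k₂), hk₂, hk₂ne⟩ := by
    refine .inr ⟨hpq, hk₁₂, hk₂pred, ?_⟩
    rintro ⟨k, hk, hk₂k : k₂ < k, -, hkpred⟩
    have := hk₂max k hk ⟨hk₁₂.trans hk₂k, hkpred⟩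
    omega
  have : f p ≤ k₁ := hI (.single hrel) hqk₂
  omega

lemma isIdealG_idealOfLabel_iff [Fintype P] (hcons : Consistent R hR) {f : P → ℤ}
    (hf : ∀ p, f p ∈ R p) : IsIdealG R hR (idealOfLabel R hR f) ↔ IncLabel R f := by
  refine ⟨fun hI => ⟨hf, fun p q hpq => ?_⟩, isIdealG_idealOfLabel⟩
  classical
  let : LocallyFiniteOrder P := Fintype.toLocallyFiniteOrder
  have hchain := transGen_covBy_of_lt hpq
  clear hpq
  induction hchain with
  | single hcov => exact lt_of_covBy_of_isIdealG hcons hf hI hcov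
  | tail _ hcov ih => exact ih.trans (lt_of_covBy_of_isIdealG hcons hf hI hcov)

lemma not_isToggleable_of_lt {f : P → ℤ} (hf : ∀ p, f p ∈ R p) {x : GammaSet R hR}
    (hlt : f x.1.1 < x.1.2) : ¬ IsToggleable (idealOfLabel R hR f) x := by
  obtain ⟨⟨p, i⟩, hi, himax⟩ := x
  obtain ⟨m, hm, hmi, hfm, hmmax⟩ :=
    Finset.exists_greatest_of_mem (Q := (· < i)) (hf p) hlt
  have hmmax' : m ≠ (R p).max' (hR p) := ((hmi.trans_le ((R p).le_max' i hi))).ne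
  have hrel : GammaRel R hR ⟨(p, i), hi, himax⟩ ⟨(p, m), hm, hmmax'⟩ :=
    .inl ⟨rfl, hmi, fun k hk hmk => not_lt.1 fun hki => (hmmax k hk hki).not_gt hmk⟩
  exact fun h => h.1 hlt.le _ hfm hrel

lemma not_isToggleable_of_Rgt_lt {f : P → ℤ} (hf : ∀ p, f p ∈ R p) {x : GammaSet R hR}
    (hlt : Rgt R x.1.1 x.1.2 < f x.1.1) : ¬ IsToggleable (idealOfLabel R hR f) x := by
  obtain ⟨⟨p, i⟩, hi, himax⟩ := x
  change Rgt R p i < f p at hlt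
  obtain ⟨hRgt, hiRgt, -⟩ := Rgt_spec (hf p) ((le_Rgt p i).trans_lt hlt)
  have hRgtmax : Rgt R p i ≠ (R p).max' (hR p) := (hlt.trans_le ((R p).le_max' _ (hf p))).ne
  have hrel : GammaRel R hR ⟨(p, Rgt R p i), hRgt, hRgtmax⟩ ⟨(p, i), hi, himax⟩ :=
    .inl ⟨rfl, hiRgt, fun k hk hik => (Rgt_spec hk hik).2.2⟩
  have hnot : ¬ f p ≤ i := by have := le_Rgt (R := R) p i; omega
  exact fun h => (h.2 hnot _ hrel : f p ≤ Rgt R p i).not_gt hlt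

variable [DecidableEq P]

lemma idealOfLabel_update_of_swap {g : P → ℤ} {w : ℤ} (x : GammaSet R hR)
    (h : (g x.1.1 = x.1.2 ∧ w = Rgt R x.1.1 x.1.2) ∨ (g x.1.1 = Rgt R x.1.1 x.1.2 ∧ w = x.1.2)) :
    idealOfLabel R hR (Function.update g x.1.1 w) = symmDiff (idealOfLabel R hR g) {x} := by
  ext y
  simp only [idealOfLabel, Set.mem_symmDiff, Set.mem_ofPred_eq, Set.mem_singleton_iff,
    Function.update_apply]
  split_ifs with hyx
  · have hyx' : y = x ↔ y.1.2 = x.1.2 := ⟨fun h => h ▸ rfl, fun h => Subtype.ext (Prod.ext hyx h)⟩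
    rw [hyx', congrArg g hyx, le_iff_of_swap (hyx ▸ y.2.1) x.lt_Rgt h]
    tauto
  · have : y ≠ x := fun h => hyx (h ▸ rfl)
    tauto

lemma gbk_eq_or_swap (i : ℤ) (f : P → ℤ) (p : P) :
    gbk R i f p = f p ∨
      (f p = i ∧ gbk R i f p = Rgt R p i) ∨ (f p = Rgt R p i ∧ gbk R i f p = i) := by
  unfold gbk
  split_ifs with h₁ h₂ <;> tauto

lemma idealOfLabel_gbk (i : ℤ) (f : P → ℤ) :
    idealOfLabel R hR (gbk R i f) =
      symmDiff (idealOfLabel R hR f) {y | y.1.2 = i ∧ gbk R i f y.1.1 ≠ f y.1.1} := by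
  ext y
  simp only [idealOfLabel, Set.mem_symmDiff, Set.mem_ofPred_eq]
  by_cases hgf : gbk R i f y.1.1 = f y.1.1
  · rw [hgf]
    tauto
  · have h := (gbk_eq_or_swap i f y.1.1).resolve_left hgf
    have hi : i < Rgt R y.1.1 i := by
      refine (le_Rgt y.1.1 i).lt_of_ne fun hiR => hgf ?_
      rcases h with ⟨h₁, h₂⟩ | ⟨h₁, h₂⟩ <;> omega
    rw [le_iff_of_swap y.2.1 hi (by tauto)]
    tauto

lemma gbk_mem {f : P → ℤ} (hf : ∀ p, f p ∈ R p) (i : ℤ) (p : P) : gbk R i f p ∈ R p := by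
  unfold gbk
  split_ifs with h₁ h₂
  · simpa using h₁.2.1 p
  · simpa using h₂.2.1 p
  · exact hf p

lemma gbk_ne_iff {f : P → ℤ} {i w : ℤ} {p : P} (hi : i < Rgt R p i)
    (h : (f p = i ∧ w = Rgt R p i) ∨ (f p = Rgt R p i ∧ w = i)) :
    gbk R i f p ≠ f p ↔ IncLabel R (Function.update f p w) := by
  unfold gbk
  rcases h with ⟨h₁, rfl⟩ | ⟨h₁, rfl⟩ <;> split_ifs with c₁ c₂ <;> grind

lemma isToggleable_iff_gbk_ne [Fintype P] (hcons : Consistent R hR) {f : P → ℤ}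
    (hf : IncLabel R f) (x : GammaSet R hR) :
    IsToggleable (idealOfLabel R hR f) x ↔ gbk R x.1.2 f x.1.1 ≠ f x.1.1 := by
  have hi := x.lt_Rgt
  by_cases hswap : ∃ w, (f x.1.1 = x.1.2 ∧ w = Rgt R x.1.1 x.1.2) ∨
      (f x.1.1 = Rgt R x.1.1 x.1.2 ∧ w = x.1.2)
  · obtain ⟨w, hw⟩ := hswap
    have hwR : w ∈ R x.1.1 := by
      rcases hw with ⟨-, rfl⟩ | ⟨-, rfl⟩
      exacts [x.Rgt_mem, x.2.1]
    have hupd : ∀ q, Function.update f x.1.1 w q ∈ R q := fun q => by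
      rcases eq_or_ne q x.1.1 with rfl | hq
      · simpa using hwR
      · simpa [hq] using hf.1 q
    rw [gbk_ne_iff hi hw, ← isIdealG_symmDiff_singleton_iff (isIdealG_idealOfLabel hf),
      ← idealOfLabel_update_of_swap x hw, isIdealG_idealOfLabel_iff hcons hupd]
  · have hne₁ : f x.1.1 ≠ x.1.2 := fun h => hswap ⟨_, .inl ⟨h, rfl⟩⟩
    have hne₂ : f x.1.1 ≠ Rgt R x.1.1 x.1.2 := fun h => hswap ⟨_, .inr ⟨h, rfl⟩⟩
    have hgbk : gbk R x.1.2 f x.1.1 = f x.1.1 :=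
      (gbk_eq_or_swap x.1.2 f x.1.1).resolve_right fun h => hswap ⟨_, h⟩
    simp only [hgbk, ne_eq, not_true_eq_false, iff_false]
    rcases hne₁.lt_or_gt with hlt | hgt
    · exact not_isToggleable_of_lt hf.1 hlt
    · exact not_isToggleable_of_Rgt_lt hf.1 ((Rgt_spec (hf.1 _) hgt).2.2.lt_of_ne hne₂.symm)

end Labels

section Promotion

variable {P : Type*} [Fintype P] [PartialOrder P] [DecidableEq P] {R : P → Finset ℤ}
  {hR : ∀ p, (R p).Nonempty}

lemma idealOfLabel_gbk_eq_foldr_toggleG (hcons : Consistent R hR) {i : ℤ}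
    (L : List (GammaSet R hR)) (hL : L.Nodup ∧ ∀ x, x ∈ L ↔ x.1.2 = i) {f : P → ℤ}
    (hf : IncLabel R f) :
    idealOfLabel R hR (gbk R i f) =
      L.foldr (fun x g => toggleG R hR x ∘ g) id (idealOfLabel R hR f) := by
  rw [foldr_toggleG_eq_symmDiff (isIdealG_idealOfLabel hf) L hL.1 (fun x hx => (hL.2 x).1 hx),
    idealOfLabel_gbk]
  congr 1
  ext y
  simp only [Set.mem_ofPred_eq, hL.2]
  constructor
  · rintro ⟨rfl, h⟩
    exact ⟨rfl, (isToggleable_iff_gbk_ne hcons hf y).2 h⟩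
  · rintro ⟨rfl, h⟩
    exact ⟨rfl, (isToggleable_iff_gbk_ne hcons hf y).1 h⟩

/-- `ρ_i` preserves `Inc_R(P)`, because `φ ∘ ρ_i = T^i ∘ φ` lands in `J(Γ(P,R))`. -/
lemma incLabel_gbk (hcons : Consistent R hR) {i : ℤ} (L : List (GammaSet R hR))
    (hL : L.Nodup ∧ ∀ x, x ∈ L ↔ x.1.2 = i) {f : P → ℤ} (hf : IncLabel R f) :
    IncLabel R (gbk R i f) := by
  refine (isIdealG_idealOfLabel_iff hcons (gbk_mem hf.1 i)).1 ?_
  rw [idealOfLabel_gbk_eq_foldr_toggleG hcons L hL hf]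
  exact isIdealG_foldr_toggleG (isIdealG_idealOfLabel hf) L

lemma idealOfLabel_foldl_gbk (hcons : Consistent R hR) (T : ℤ → List (GammaSet R hR))
    (hT : ∀ i : ℤ, (T i).Nodup ∧ ∀ x : GammaSet R hR, x ∈ T i ↔ x.1.2 = i)
    (M : List ℤ) {f : P → ℤ} (hf : IncLabel R f) :
    idealOfLabel R hR (M.foldl (fun g i => gbk R i g) f) =
      M.foldl (fun s i => (T i).foldr (fun x g => toggleG R hR x ∘ g) id s)
        (idealOfLabel R hR f) := by
  induction M generalizing f with
  | nil => rfl
  | cons i M ih =>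
    rw [List.foldl_cons, List.foldl_cons, ih (incLabel_gbk hcons (T i) (hT i) hf),
      idealOfLabel_gbk_eq_foldr_toggleG hcons (T i) (hT i) hf]

end Promotion

theorem stmt18_general {P : Type*} [Fintype P] [PartialOrder P] [DecidableEq P]
    (R : P → Finset ℤ) (hR : ∀ p, (R p).Nonempty) (hcons : Consistent R hR)
    (a b : ℤ)
    (T : ℤ → List (GammaSet R hR))
    (hT : ∀ i : ℤ, (T i).Nodup ∧ ∀ x : GammaSet R hR, x ∈ T i ↔ x.1.2 = i) :
    (∀ i : ℤ, ∀ f : P → ℤ, IncLabel R f →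
      {x : GammaSet R hR | gbk R i f x.1.1 ≤ x.1.2} =
        (T i).foldr (fun x g => toggleG R hR x ∘ g) id
          {x : GammaSet R hR | f x.1.1 ≤ x.1.2}) ∧
    (∀ f : P → ℤ, IncLabel R f →
      {x : GammaSet R hR |
          (((List.range (b + 1 - a).toNat).map fun j => a + (j : ℤ)).foldl
            (fun g i => gbk R i g) f) x.1.1 ≤ x.1.2} =
        (((List.range (b + 1 - a).toNat).map fun j => a + (j : ℤ)).foldl
            (fun g i => ((T i).foldr (fun x g' => toggleG R hR x ∘ g') id) ∘ g) id)
          {x : GammaSet R hR | f x.1.1 ≤ x.1.2}) :=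
  ⟨fun i _ hf => idealOfLabel_gbk_eq_foldr_toggleG hcons (T i) (hT i) hf,
    fun f hf => (idealOfLabel_foldl_gbk hcons T hT _ hf).trans
      (List.foldl_hom (fun G : Set (GammaSet R hR) → Set (GammaSet R hR) =>
        G (idealOfLabel R hR f)) fun _ _ => rfl)⟩

/-- The bijection `φ(f) = {(p,k) ∈ Γ(P,R) : f p ≤ k}` intertwines the
generalized Bender-Knuth involution `ρ_i` with the toggle operator `T^i`
(the composition, in any order, of the toggles `t_{(p,i)}`); consequently it
intertwines increasing-labeling promotion `Pro = ρ_b ∘ ⋯ ∘ ρ_a` with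
toggle-promotion `TogPro_{H_Γ} = T^b ∘ ⋯ ∘ T^a`, where `[a,b]` contains all
labels of all sets `R(p)`. -/
theorem stmt18 {P : Type*} [Fintype P] [PartialOrder P] [DecidableEq P]
    (R : P → Finset ℤ) (hR : ∀ p, (R p).Nonempty) (hcons : Consistent R hR)
    (a b : ℤ) (hab : ∀ p : P, ∀ k ∈ R p, a ≤ k ∧ k ≤ b)
    (T : ℤ → List (GammaSet R hR))
    (hT : ∀ i : ℤ, (T i).Nodup ∧ ∀ x : GammaSet R hR, x ∈ T i ↔ x.1.2 = i) :
    (∀ i : ℤ, ∀ f : P → ℤ, IncLabel R f →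
      {x : GammaSet R hR | gbk R i f x.1.1 ≤ x.1.2} =
        (T i).foldr (fun x g => toggleG R hR x ∘ g) id
          {x : GammaSet R hR | f x.1.1 ≤ x.1.2}) ∧
    (∀ f : P → ℤ, IncLabel R f →
      {x : GammaSet R hR |
          (((List.range (b + 1 - a).toNat).map fun j => a + (j : ℤ)).foldl
            (fun g i => gbk R i g) f) x.1.1 ≤ x.1.2} =
        (((List.range (b + 1 - a).toNat).map fun j => a + (j : ℤ)).foldl
            (fun g i => ((T i).foldr (fun x g' => toggleG R hR x ∘ g') id) ∘ g) id)
          {x : GammaSet R hR | f x.1.1 ≤ x.1.2}) :=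
  stmt18_general R hR hcons a b T hT
end
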